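/- arXiv:1903.00522 — 16 statements merged into one kernel-verified Lean document; each statement's English description precedes it below -/
import Mathlib

section
/- Let X and Y be complex Banach spaces, A : X → Y and B, C : Y → X bounded linear operators satisfying A(BA)² = ABACA = ACABA = (AC)²A, and let λ ∈ ℂ. Then AC has the single valued extension property at λ if and only if BA has the single valued extension property at λ. -/
open ContinuousLinearMap Filter Topology Set

/-- `T` has the single valued extension property at `lam` : there is an open disc `V`
centered at `lam` such that for every open `U ⊆ V`, the only analytic solution
`f : U → E` of `(T - μ) f μ = 0` on `U` is `f ≡ 0`. -/
def HasSVEPAt {E : Type*} [NormedAddCommGroup E] [NormedSpace ℂ E]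
    (T : E →L[ℂ] E) (lam : ℂ) : Prop :=
  ∃ r > (0 : ℝ), ∀ U : Set ℂ, U ⊆ Metric.ball lam r → IsOpen U →
    ∀ f : ℂ → E, AnalyticOnNhd ℂ f U →
      (∀ mu ∈ U, T (f mu) - mu • f mu = 0) → ∀ mu ∈ U, f mu = 0

lemma extZero_aux {E : Type*} [NormedAddCommGroup E] [NormedSpace ℂ E]
    {U : Set ℂ} (hU : IsOpen U) {g : ℂ → E} (hg : ContinuousOn g U)
    (h : ∀ mu ∈ U, mu ≠ 0 → g mu = 0) : ∀ mu ∈ U, g mu = 0 := by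
  intro mu hmu
  rcases eq_or_ne mu 0 with rfl | hne
  · have hcont : ContinuousAt g 0 := hg.continuousAt (hU.mem_nhds hmu)
    have ht1 : Tendsto g (𝓝[≠] (0:ℂ)) (𝓝 (g 0)) :=
      hcont.continuousWithinAt.tendsto
    have hev : ∀ᶠ x in 𝓝[≠] (0:ℂ), g x = 0 := by
      filter_upwards [self_mem_nhdsWithin,
        nhdsWithin_le_nhds (hU.mem_nhds hmu)] with x hx hxU
      exact h x hxU hx
    have ht2 : Tendsto g (𝓝[≠] (0:ℂ)) (𝓝 0) :=
      Tendsto.congr' (hev.mono fun x hx => hx.symm) tendsto_const_nhds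
    exact tendsto_nhds_unique ht1 ht2
  · exact h mu hmu hne

lemma clm_comp_analytic {E F : Type*} [NormedAddCommGroup E] [NormedSpace ℂ E]
    [NormedAddCommGroup F] [NormedSpace ℂ F]
    (T : E →L[ℂ] F) {f : ℂ → E} {U : Set ℂ} (hf : AnalyticOnNhd ℂ f U) :
    AnalyticOnNhd ℂ (fun z => T (f z)) U :=
  fun z hz => (T.analyticAt (f z)).comp (hf z hz)

theorem stmt_0 {X Y : Type*} [NormedAddCommGroup X] [NormedSpace ℂ X] [CompleteSpace X]
    [NormedAddCommGroup Y] [NormedSpace ℂ Y] [CompleteSpace Y]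
    (A : X →L[ℂ] Y) (B C : Y →L[ℂ] X)
    (h1 : A ∘L B ∘L A ∘L B ∘L A = A ∘L B ∘L A ∘L C ∘L A)
    (h2 : A ∘L B ∘L A ∘L C ∘L A = A ∘L C ∘L A ∘L B ∘L A)
    (h3 : A ∘L C ∘L A ∘L B ∘L A = A ∘L C ∘L A ∘L C ∘L A)
    (lam : ℂ) :
    HasSVEPAt (A ∘L C) lam ↔ HasSVEPAt (B ∘L A) lam := by
  -- pointwise versions of the word identities
  have e13 : ∀ v : X, A (B (A (B (A v)))) = A (C (A (C (A v)))) := by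
    intro v
    have := DFunLike.congr_fun (h1.trans (h2.trans h3)) v
    simpa using this
  have e2 : ∀ v : X, A (C (A (B (A v)))) = A (C (A (C (A v)))) := by
    intro v
    have := DFunLike.congr_fun h3 v
    simpa using this
  have e1' : ∀ v : X, A (B (A (C (A v)))) = A (C (A (C (A v)))) := by
    intro v
    have := DFunLike.congr_fun (h2.trans h3) v
    simpa using this
  constructor
  · -- AC SVEP → BA SVEP
    rintro ⟨r, hr, hsvep⟩
    refine ⟨r, hr, ?_⟩
    intro U hUb hUo f hf heq
    have hfe : ∀ mu ∈ U, B (A (f mu)) = mu • f mu := by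
      intro mu hmu
      have := heq mu hmu
      rw [sub_eq_zero] at this
      simpa using this
    set g : ℂ → Y := fun mu => A (C (A (f mu))) with hgdef
    have hganal : AnalyticOnNhd ℂ g U :=
      clm_comp_analytic A (clm_comp_analytic C (clm_comp_analytic A hf))
    have hgeq : ∀ mu ∈ U, (A ∘L C) (g mu) - mu • g mu = 0 := by
      intro mu hmu
      have hy := hfe mu hmu
      simp only [comp_apply, hgdef]
      rw [sub_eq_zero]
      calc A (C (A (C (A (f mu)))))
          = A (C (A (B (A (f mu))))) := (e2 (f mu)).symm
        _ = mu • A (C (A (f mu))) := by rw [hy]; simp [map_smul]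
    have hg0 : ∀ mu ∈ U, g mu = 0 := hsvep U hUb hUo g hganal hgeq
    apply extZero_aux hUo hf.continuousOn
    intro mu hmu hne
    have hy := hfe mu hmu
    have hga : A (C (A (f mu))) = 0 := hg0 mu hmu
    have c1 : A (B (A (B (A (f mu))))) = (mu * mu) • A (f mu) := by
      rw [hy]
      simp only [map_smul, hy, smul_smul]
    have c2 : A (B (A (B (A (f mu))))) = 0 := by
      rw [e13 (f mu), hga, map_zero, map_zero]
    have hAf : (mu * mu) • A (f mu) = 0 := c1.symm.trans c2
    have hAf0 : A (f mu) = 0 := by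
      rcases smul_eq_zero.mp hAf with h | h
      · exact absurd h (mul_ne_zero hne hne)
      · exact h
    have : mu • f mu = 0 := by rw [← hy, hAf0, map_zero]
    rcases smul_eq_zero.mp this with h | h
    · exact absurd h hne
    · exact h
  · -- BA SVEP → AC SVEP
    rintro ⟨r, hr, hsvep⟩
    refine ⟨r, hr, ?_⟩
    intro U hUb hUo f hf heq
    have hfe : ∀ mu ∈ U, A (C (f mu)) = mu • f mu := by
      intro mu hmu
      have := heq mu hmu
      rw [sub_eq_zero] at this
      simpa using this
    set g : ℂ → X := fun mu => B (A (B (f mu))) with hgdef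
    have hganal : AnalyticOnNhd ℂ g U :=
      clm_comp_analytic B (clm_comp_analytic A (clm_comp_analytic B hf))
    -- the eigen-equation for g, first off mu = 0, then by continuity everywhere
    have hgeq : ∀ mu ∈ U, (B ∘L A) (g mu) - mu • g mu = 0 := by
      have hFcont : ContinuousOn (fun mu => (B ∘L A) (g mu) - mu • g mu) U := by
        have hgc : ContinuousOn g U := hganal.continuousOn
        exact ((B ∘L A).continuous.comp_continuousOn hgc).sub
          (continuousOn_id.smul hgc)
      apply extZero_aux hUo hFcont
      intro mu hmu hne
      have hy := hfe mu hmu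
      simp only [comp_apply, hgdef]
      rw [sub_eq_zero]
      -- notation: y = f mu
      set y := f mu with hydef
      -- reductions
      have d1 : A (C (A (C y))) = (mu * mu) • y := by
        simp only [hy, map_smul, smul_smul]
      -- multiply target by mu^2 and cancel
      have L : (mu * mu) • B (A (B (A (B y)))) = ((mu*mu)*(mu*mu)) • B y := by
        calc (mu * mu) • B (A (B (A (B y))))
            = B (A (B (A (B ((mu*mu) • y))))) := by simp [map_smul]
          _ = B (A (B (A (B (A (C (A (C y)))))))) := by rw [d1]
          _ = B (A (C (A (C (A (C (A (C y)))))))) := by rw [e13 (C (A (C y)))]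
          _ = ((mu*mu)*(mu*mu)) • B y := by
              simp only [hy, map_smul, smul_smul]
              try module
      have R : (mu * mu) • B (A (B y)) = ((mu*mu)*mu) • B y := by
        calc (mu * mu) • B (A (B y))
            = B (A (B ((mu*mu) • y))) := by simp [map_smul]
          _ = B (A (B (A (C (A (C y)))))) := by rw [d1]
          _ = B (A (C (A (C (A (C y)))))) := by rw [e1' (C y)]
          _ = ((mu*mu)*mu) • B y := by
              simp only [hy, map_smul, smul_smul]
              try module
      have hmm : (mu * mu) ≠ 0 := mul_ne_zero hne hne
      have key : (mu*mu) • B (A (B (A (B y)))) = (mu*mu) • (mu • B (A (B y))) := by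
        rw [L]
        rw [smul_comm (mu*mu) mu, R, smul_smul]
        module
      exact smul_right_injective X hmm key
    have hg0 : ∀ mu ∈ U, g mu = 0 := hsvep U hUb hUo g hganal hgeq
    apply extZero_aux hUo hf.continuousOn
    intro mu hmu hne
    have hy := hfe mu hmu
    set y := f mu with hydef
    have hgz : B (A (B y)) = 0 := hg0 mu hmu
    have d1 : A (C (A (C y))) = (mu * mu) • y := by
      simp only [hy, map_smul, smul_smul]
    have c1 : A (B (A (B ((mu*mu) • y)))) = ((mu*mu)*(mu*mu)) • y := by
      rw [← d1, e13 (C (A (C y)))]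
      simp only [hy, map_smul, smul_smul]
      try module
    have c2 : A (B (A (B ((mu*mu) • y)))) = 0 := by
      simp only [map_smul, hgz, map_zero, smul_zero]
    have hzero : ((mu*mu)*(mu*mu)) • y = 0 := c1.symm.trans c2
    rcases smul_eq_zero.mp hzero with h | h
    · exact absurd h (mul_ne_zero (mul_ne_zero hne hne) (mul_ne_zero hne hne))
    · exact h
end

section
/- Let X and Y be complex Banach spaces, A : X → Y and B, C : Y → X bounded linear operators satisfying A(BA)² = ABACA = ACABA = (AC)²A, and let U ⊆ ℂ be an open set. Then AC satisfies Bishop's property (β) on U if and only if BA satisfies Bishop's property (β) on U. In particular, AC satisfies Bishop's property (β) (on all of ℂ) if and only if BA does. -/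
open ContinuousLinearMap Filter Topology Set

/-- `T` satisfies Bishop's property (β) on the open set `U` : for every open `V ⊆ U`
and every sequence `fₙ` of analytic `E`-valued functions on `V`, if
`(T - μ) fₙ μ → 0` uniformly on every compact subset of `V`, then `fₙ → 0`
uniformly on every compact subset of `V`. -/
def BishopBetaOn {E : Type*} [NormedAddCommGroup E] [NormedSpace ℂ E]
    (T : E →L[ℂ] E) (U : Set ℂ) : Prop :=
  ∀ V : Set ℂ, V ⊆ U → IsOpen V →
    ∀ f : ℕ → ℂ → E, (∀ n, AnalyticOnNhd ℂ (f n) V) →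
      (∀ K ⊆ V, IsCompact K →
        TendstoUniformlyOn (fun n mu => T (f n mu) - mu • f n mu) 0 atTop K) →
      ∀ K ⊆ V, IsCompact K → TendstoUniformlyOn (fun n mu => f n mu) 0 atTop K

section Helpers

variable {E F : Type*} [NormedAddCommGroup E] [NormedSpace ℂ E]
  [NormedAddCommGroup F] [NormedSpace ℂ F]

lemma tuoZero_iff {h : ℕ → ℂ → E} {K : Set ℂ} :
    TendstoUniformlyOn h 0 atTop K ↔
      ∀ ε > 0, ∀ᶠ n in atTop, ∀ x ∈ K, ‖h n x‖ < ε := by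
  rw [Metric.tendstoUniformlyOn_iff]
  simp [dist_eq_norm]

lemma tuoZero_clm (L : E →L[ℂ] F) {h : ℕ → ℂ → E} {K : Set ℂ}
    (hh : TendstoUniformlyOn h 0 atTop K) :
    TendstoUniformlyOn (fun n x => L (h n x)) 0 atTop K := by
  rw [tuoZero_iff] at hh ⊢
  intro ε hε
  have hL : (0:ℝ) < ‖L‖ + 1 := by positivity
  filter_upwards [hh (ε / (‖L‖ + 1)) (by positivity)] with n hn x hx
  calc ‖L (h n x)‖ ≤ ‖L‖ * ‖h n x‖ := L.le_opNorm _
    _ ≤ ‖L‖ * (ε / (‖L‖ + 1)) :=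
        mul_le_mul_of_nonneg_left (hn x hx).le (norm_nonneg L)
    _ < (‖L‖ + 1) * (ε / (‖L‖ + 1)) :=
        mul_lt_mul_of_pos_right (lt_add_one _) (by positivity)
    _ = ε := by field_simp

lemma tuoZero_smul {c : ℂ → ℂ} {M : ℝ} {h : ℕ → ℂ → E} {K : Set ℂ}
    (hc : ∀ x ∈ K, ‖c x‖ ≤ M)
    (hh : TendstoUniformlyOn h 0 atTop K) :
    TendstoUniformlyOn (fun n x => c x • h n x) 0 atTop K := by
  rw [tuoZero_iff] at hh ⊢
  intro ε hε
  set M' : ℝ := max M 0 with hM'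
  have hM0 : (0:ℝ) ≤ M' := le_max_right _ _
  have hM1 : (0:ℝ) < M' + 1 := by positivity
  filter_upwards [hh (ε / (M' + 1)) (by positivity)] with n hn x hx
  calc ‖c x • h n x‖ = ‖c x‖ * ‖h n x‖ := norm_smul _ _
    _ ≤ M' * (ε / (M' + 1)) :=
        mul_le_mul ((hc x hx).trans (le_max_left _ _)) (hn x hx).le
          (norm_nonneg _) hM0
    _ < (M' + 1) * (ε / (M' + 1)) :=
        mul_lt_mul_of_pos_right (lt_add_one _) (by positivity)
    _ = ε := by field_simp

/-- If `μ ↦ μ³ • f n μ` tends to `0` uniformly on compact subsets of the open set `V`,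
and each `f n` is analytic on `V`, then `f n → 0` uniformly on compact subsets of `V`. -/
lemma cube_smul_to_self {V : Set ℂ} (hV : IsOpen V)
    {f : ℕ → ℂ → E} (hf : ∀ n, AnalyticOnNhd ℂ (f n) V)
    (h : ∀ K ⊆ V, IsCompact K →
      TendstoUniformlyOn (fun n mu => mu ^ 3 • f n mu) 0 atTop K) :
    ∀ K ⊆ V, IsCompact K → TendstoUniformlyOn (fun n mu => f n mu) 0 atTop K := by
  rw [← tendstoLocallyUniformlyOn_iff_forall_isCompact hV]
  rw [Metric.tendstoLocallyUniformlyOn_iff]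
  intro ε hε x hx
  obtain ⟨r, hr, hball⟩ : ∃ r > 0, Metric.closedBall x r ⊆ V := by
    rcases Metric.isOpen_iff.mp hV x hx with ⟨r, hr, hb⟩
    exact ⟨r / 2, by positivity,
      (Metric.closedBall_subset_ball (by linarith)).trans hb⟩
  by_cases hx0 : x = 0
  · -- maximum modulus argument on the disc around 0
    subst hx0
    refine ⟨Metric.closedBall 0 r, mem_nhdsWithin_of_mem_nhds
      (Metric.closedBall_mem_nhds _ hr), ?_⟩
    have hr3 : (0:ℝ) < r ^ 3 := by positivity
    have hcomp : IsCompact (Metric.closedBall (0:ℂ) r) := isCompact_closedBall _ _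
    filter_upwards [(tuoZero_iff.mp (h _ hball hcomp)) (ε / 2 * r ^ 3)
      (by positivity)] with n hn y hy
    -- bound on the sphere
    have hsp : ∀ z ∈ frontier (Metric.ball (0:ℂ) r), ‖f n z‖ ≤ ε / 2 := by
      intro z hz
      rw [frontier_ball _ hr.ne'] at hz
      have hzr : ‖z‖ = r := by simpa using hz
      have hzV : z ∈ Metric.closedBall (0:ℂ) r := by
        simp [Metric.mem_closedBall, dist_zero_right, hzr]
      have hb : r ^ 3 * ‖f n z‖ ≤ ε / 2 * r ^ 3 := by
        have := (hn z hzV).le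
        simpa [norm_smul, hzr] using this
      have hstep : r ^ 3 * ‖f n z‖ ≤ r ^ 3 * (ε / 2) := by
        calc r ^ 3 * ‖f n z‖ ≤ ε / 2 * r ^ 3 := hb
          _ = r ^ 3 * (ε / 2) := mul_comm _ _
      exact le_of_mul_le_mul_left hstep hr3
    have hd : DiffContOnCl ℂ (f n) (Metric.ball (0:ℂ) r) := by
      have hdV : DifferentiableOn ℂ (f n) V := fun z hz =>
        ((hf n) z hz).differentiableAt.differentiableWithinAt
      exact DifferentiableOn.diffContOnCl <| by
        rw [closure_ball _ hr.ne']
        exact hdV.mono hball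
    have hyc : y ∈ closure (Metric.ball (0:ℂ) r) := by
      rwa [closure_ball _ hr.ne']
    have hmax : ‖f n y‖ ≤ ε / 2 :=
      Complex.norm_le_of_forall_mem_frontier_norm_le
        Metric.isBounded_ball hd hsp hyc
    calc dist ((0 : ℂ → E) y) (f n y) = ‖f n y‖ := by simp
      _ ≤ ε / 2 := hmax
      _ < ε := by linarith
  · -- away from zero: divide by μ³
    have hxn : (0:ℝ) < ‖x‖ := by simpa [norm_pos_iff] using hx0
    set r' : ℝ := min r (‖x‖ / 2) with hr'
    have hr'0 : 0 < r' := lt_min hr (by positivity)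
    have hsub : Metric.closedBall x r' ⊆ V :=
      (Metric.closedBall_subset_closedBall (min_le_left _ _)).trans hball
    refine ⟨Metric.closedBall x r', mem_nhdsWithin_of_mem_nhds
      (Metric.closedBall_mem_nhds _ hr'0), ?_⟩
    have hc3 : (0:ℝ) < (‖x‖ / 2) ^ 3 := by positivity
    filter_upwards [(tuoZero_iff.mp (h _ hsub (isCompact_closedBall _ _)))
      (ε / 2 * (‖x‖ / 2) ^ 3) (by positivity)] with n hn y hy
    have hyl : ‖x‖ / 2 ≤ ‖y‖ := by
      have h1 : dist y x ≤ r' := Metric.mem_closedBall.mp hy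
      have h2 : dist y x ≤ ‖x‖ / 2 := h1.trans (min_le_right _ _)
      have h3 := norm_sub_norm_le x y
      rw [← dist_eq_norm, dist_comm] at h3
      linarith
    have hy3 : (‖x‖ / 2) ^ 3 ≤ ‖y‖ ^ 3 := pow_le_pow_left₀ (by positivity) hyl 3
    have hyn : (0:ℝ) < ‖y‖ ^ 3 := lt_of_lt_of_le hc3 hy3
    have hkey : ‖y‖ ^ 3 * ‖f n y‖ ≤ ε / 2 * (‖x‖ / 2) ^ 3 := by
      have := (hn y hy).le
      simpa [norm_smul] using this
    have hle : ‖f n y‖ ≤ ε / 2 := by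
      have hstep : ‖y‖ ^ 3 * ‖f n y‖ ≤ ‖y‖ ^ 3 * (ε / 2) := by
        calc ‖y‖ ^ 3 * ‖f n y‖ ≤ ε / 2 * (‖x‖ / 2) ^ 3 := hkey
          _ ≤ ε / 2 * ‖y‖ ^ 3 := by
              exact mul_le_mul_of_nonneg_left hy3 (by positivity)
          _ = ‖y‖ ^ 3 * (ε / 2) := mul_comm _ _
      exact le_of_mul_le_mul_left hstep hyn
    calc dist ((0 : ℂ → E) y) (f n y) = ‖f n y‖ := by simp
      _ ≤ ε / 2 := hle
      _ < ε := by linarith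

/-- Abstract transfer lemma: if `S` has β on `U`, `S ∘ R = R ∘ T` and `Q ∘ R = T³`,
then `T` has β on `U`. -/
lemma bishopBeta_transfer
    {T : E →L[ℂ] E} {S : F →L[ℂ] F} (R : E →L[ℂ] F) (Q : F →L[ℂ] E)
    (hSR : S ∘L R = R ∘L T) (hQR : Q ∘L R = T ∘L T ∘L T)
    {U : Set ℂ} (hS : BishopBetaOn S U) : BishopBetaOn T U := by
  intro V hVU hV f hf hconv
  have hgana : ∀ n, AnalyticOnNhd ℂ (fun mu => R (f n mu)) V := fun n =>
    R.comp_analyticOnNhd (hf n)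
  have hgconv : ∀ K ⊆ V, IsCompact K →
      TendstoUniformlyOn
        (fun n mu => S (R (f n mu)) - mu • R (f n mu)) 0 atTop K := by
    intro K hK hKc
    have hR := tuoZero_clm R (hconv K hK hKc)
    have heq : (fun n mu => S (R (f n mu)) - mu • R (f n mu))
        = fun n mu => R (T (f n mu) - mu • f n mu) := by
      funext n mu
      have h1 : S (R (f n mu)) = R (T (f n mu)) := by
        have := congrArg (fun (L : E →L[ℂ] F) => L (f n mu)) hSR
        simpa using this
      simp [map_sub, h1]
    rw [heq]
    exact hR
  have hgzero := hS V hVU hV (fun n mu => R (f n mu)) hgana hgconv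
  -- now μ³ • f n μ → 0 on compacts
  have hcube : ∀ K ⊆ V, IsCompact K →
      TendstoUniformlyOn (fun n mu => mu ^ 3 • f n mu) 0 atTop K := by
    intro K hK hKc
    obtain ⟨M, hM⟩ : ∃ M : ℝ, ∀ x ∈ K, ‖x‖ ≤ M := by
      rcases hKc.isBounded.subset_closedBall 0 with ⟨M, hM⟩
      exact ⟨M, fun x hx => by simpa [dist_zero_right] using hM hx⟩
    have hp := hconv K hK hKc
    have hA := tuoZero_clm Q (hgzero K hK hKc)
    have hB := tuoZero_clm (T ∘L T) hp
    have hC := tuoZero_smul (c := fun mu => mu) hM (tuoZero_clm T hp)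
    have hMsq : ∀ x ∈ K, ‖(fun mu => mu ^ 2) x‖ ≤ M ^ 2 := by
      intro x hx
      simp only [norm_pow]
      exact pow_le_pow_left₀ (norm_nonneg _) (hM x hx) 2
    have hD := tuoZero_smul (c := fun mu => mu ^ 2) hMsq hp
    have hsum := ((hA.sub hB).sub hC).sub hD
    have hzero : ((0 : ℂ → E) - 0 - 0 - 0) = 0 := by simp
    rw [hzero] at hsum
    convert hsum using 1
    funext n mu
    simp only [Pi.sub_apply]
    have hQg' : Q (R (f n mu)) = T (T (T (f n mu))) := by
      have := congrArg (fun (L : E →L[ℂ] E) => L (f n mu)) hQR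
      simpa using this
    simp only [hQg', comp_apply, map_sub, map_smul]
    module
  exact cube_smul_to_self hV hf hcube

end Helpers

theorem stmt_1 {X Y : Type*} [NormedAddCommGroup X] [NormedSpace ℂ X] [CompleteSpace X]
    [NormedAddCommGroup Y] [NormedSpace ℂ Y] [CompleteSpace Y]
    (A : X →L[ℂ] Y) (B C : Y →L[ℂ] X)
    (h1 : A ∘L B ∘L A ∘L B ∘L A = A ∘L B ∘L A ∘L C ∘L A)
    (h2 : A ∘L B ∘L A ∘L C ∘L A = A ∘L C ∘L A ∘L B ∘L A)
    (h3 : A ∘L C ∘L A ∘L B ∘L A = A ∘L C ∘L A ∘L C ∘L A)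
    (U : Set ℂ) (hU : IsOpen U) :
    BishopBetaOn (A ∘L C) U ↔ BishopBetaOn (B ∘L A) U := by
  have e1 : ∀ x, A (B (A (B (A x)))) = A (B (A (C (A x)))) := fun x => by
    have := congrArg (fun (L : X →L[ℂ] Y) => L x) h1; simpa using this
  have e2 : ∀ x, A (B (A (C (A x)))) = A (C (A (B (A x)))) := fun x => by
    have := congrArg (fun (L : X →L[ℂ] Y) => L x) h2; simpa using this
  have e3 : ∀ x, A (C (A (B (A x)))) = A (C (A (C (A x)))) := fun x => by
    have := congrArg (fun (L : X →L[ℂ] Y) => L x) h3; simpa using this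
  constructor
  · -- AC has β → BA has β, via R = A ∘ (BA)², Q = B
    intro hAC
    refine bishopBeta_transfer (T := B ∘L A) (S := A ∘L C)
      (A ∘L (B ∘L A) ∘L (B ∘L A)) B ?_ ?_ hAC
    · ext x
      simp only [comp_apply]
      exact (e2 (B (A x))).symm.trans (e1 (B (A x))).symm
    · ext x
      simp only [comp_apply]
  · -- BA has β → AC has β, via R = B ∘ (AC)², Q = A
    intro hBA
    refine bishopBeta_transfer (T := A ∘L C) (S := B ∘L A)
      (B ∘L (A ∘L C) ∘L (A ∘L C)) A ?_ ?_ hBA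
    · ext y
      simp only [comp_apply]
      exact congrArg B ((e2 (C y)).trans (e3 (C y)))
    · ext y
      simp only [comp_apply]
      exact (e2 (C y)).trans (e3 (C y))
end

section
/- Let X and Y be complex Banach spaces, A : X → Y and B, C : Y → X bounded linear operators satisfying A(BA)² = ABACA = ACABA = (AC)²A. Then AC satisfies the decomposition property (δ) if and only if BA satisfies the decomposition property (δ). -/
open ContinuousLinearMap Filter Topology Set

/-- The glocal spectral subspace `𝒳_T(F)` : all `x` for which there is an analytic
function `f : ℂ ∖ F → E` with `(T - μ) f μ = x` for all `μ ∉ F`. -/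
def glocalSubspace {E : Type*} [NormedAddCommGroup E] [NormedSpace ℂ E]
    (T : E →L[ℂ] E) (F : Set ℂ) : Set E :=
  {x | ∃ f : ℂ → E, AnalyticOnNhd ℂ f Fᶜ ∧ ∀ mu ∈ Fᶜ, T (f mu) - mu • f mu = x}

/-- `T` has the decomposition property (δ) : for every open cover `U₁ ∪ U₂ = ℂ`,
`E = 𝒳_T(closure U₁) + 𝒳_T(closure U₂)`. -/
def HasPropertyDelta {E : Type*} [NormedAddCommGroup E] [NormedSpace ℂ E]
    (T : E →L[ℂ] E) : Prop :=
  ∀ U₁ U₂ : Set ℂ, IsOpen U₁ → IsOpen U₂ → U₁ ∪ U₂ = univ →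
    ∀ x : E, ∃ x₁ ∈ glocalSubspace T (closure U₁), ∃ x₂ ∈ glocalSubspace T (closure U₂),
      x = x₁ + x₂

namespace GDaux

variable {E : Type*} [NormedAddCommGroup E] [NormedSpace ℂ E]
variable {E' : Type*} [NormedAddCommGroup E'] [NormedSpace ℂ E']

lemma mono {T : E →L[ℂ] E} {F F' : Set ℂ} (h : F ⊆ F') :
    glocalSubspace T F ⊆ glocalSubspace T F' := by
  rintro x ⟨f, hf, heq⟩
  exact ⟨f, hf.mono (compl_subset_compl.2 h),
    fun μ hμ => heq μ (compl_subset_compl.2 h hμ)⟩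

lemma push {S : E →L[ℂ] E} {T : E' →L[ℂ] E'} {W : E' →L[ℂ] E}
    (hSW : ∀ y, S (W y) = W (T y)) {F : Set ℂ} {y : E'}
    (hy : y ∈ glocalSubspace T F) : W y ∈ glocalSubspace S F := by
  obtain ⟨f, hf, heq⟩ := hy
  refine ⟨fun μ => W (f μ), fun μ hμ => (W.analyticAt (f μ)).comp (hf μ hμ),
    fun μ hμ => ?_⟩
  rw [hSW, ← map_smul, ← map_sub, heq μ hμ]

lemma lift {T : E →L[ℂ] E} {F : Set ℂ} (h0 : (0:ℂ) ∈ F) {v : E}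
    (hv : T v ∈ glocalSubspace T F) : v ∈ glocalSubspace T F := by
  obtain ⟨f, hf, heq⟩ := hv
  refine ⟨fun μ => μ⁻¹ • (f μ - v), fun μ hμ => ?_, fun μ hμ => ?_⟩
  · have hμ0 : μ ≠ 0 := by rintro rfl; exact hμ h0
    exact (analyticAt_id.inv hμ0).smul ((hf μ hμ).sub analyticAt_const)
  · have hμ0 : μ ≠ 0 := by rintro rfl; exact hμ h0
    have h2 : T (f μ) = T v + μ • f μ := by
      rw [← heq μ hμ]; abel
    simp only [map_smul, map_sub, h2, add_sub_cancel_left, smul_smul,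
      inv_mul_cancel₀ hμ0, mul_inv_cancel₀ hμ0, one_smul, sub_sub_cancel]

lemma lift_iter {T : E →L[ℂ] E} {F : Set ℂ} (h0 : (0:ℂ) ∈ F) (n : ℕ) {v : E}
    (hv : (fun w => T w)^[n] v ∈ glocalSubspace T F) : v ∈ glocalSubspace T F := by
  induction n generalizing v with
  | zero => simpa using hv
  | succ n ih =>
    rw [Function.iterate_succ_apply'] at hv
    exact ih (lift h0 hv)

lemma divide {T : E →L[ℂ] E} {F : Set ℂ} (hF : IsClosed F) (h0 : (0:ℂ) ∉ F) {z : E}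
    (hz : z ∈ glocalSubspace T F) : ∃ w ∈ glocalSubspace T F, T w = z := by
  obtain ⟨f, hf, heq⟩ := hz
  have h0' : (0:ℂ) ∈ Fᶜ := h0
  have hTf0 : T (f 0) = z := by
    have := heq 0 h0'; simpa using this
  -- the difference quotient is analytic on `Fᶜ`
  have han : AnalyticOnNhd ℂ (dslope f 0) Fᶜ := by
    intro μ hμ
    rcases eq_or_ne μ 0 with rfl | hμ0
    · obtain ⟨p, hp⟩ := hf 0 h0'
      exact ⟨p.fslope, hp.has_fpower_series_dslope_fslope⟩
    · have hg : AnalyticAt ℂ (fun z : ℂ => (z - 0)⁻¹ • (f z - f 0)) μ :=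
        ((analyticAt_id.sub analyticAt_const).inv
          (by simpa using hμ0)).smul ((hf μ hμ).sub analyticAt_const)
      refine hg.congr ?_
      filter_upwards [isOpen_compl_singleton.mem_nhds (by simpa using hμ0)] with z hz
      have hz0 : z ≠ 0 := hz
      rw [dslope_of_ne _ hz0, slope]
      simp [vsub_eq_sub]
  -- the defining equation holds away from 0
  have hkey : ∀ μ ∈ Fᶜ, μ ≠ 0 → T (dslope f 0 μ) - μ • dslope f 0 μ = f 0 := by
    intro μ hμ hμ0
    have hds : dslope f 0 μ = μ⁻¹ • (f μ - f 0) := by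
      rw [dslope_of_ne _ hμ0, slope]
      simp [vsub_eq_sub]
    have h2 : T (f μ) = T (f 0) + μ • f μ := by
      rw [hTf0, ← heq μ hμ]; abel
    rw [hds]
    simp only [map_smul, map_sub, h2, add_sub_cancel_left, smul_smul,
      inv_mul_cancel₀ hμ0, mul_inv_cancel₀ hμ0, one_smul, sub_sub_cancel]
  refine ⟨f 0, ⟨dslope f 0, han, fun μ hμ => ?_⟩, hTf0⟩
  rcases eq_or_ne μ 0 with rfl | hμ0
  · -- by continuity
    have hc : ContinuousAt (fun μ : ℂ => T (dslope f 0 μ) - μ • dslope f 0 μ) 0 := by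
      have h1 : ContinuousAt (dslope f 0) 0 := (han 0 h0').continuousAt
      exact (T.continuous.continuousAt.comp h1).sub (continuousAt_id.smul h1)
    have hmem : Fᶜ \ {(0:ℂ)} ∈ 𝓝[≠] (0:ℂ) :=
      diff_mem_nhdsWithin_compl (hF.isOpen_compl.mem_nhds h0') {(0:ℂ)}
    have ht1 : Tendsto (fun μ : ℂ => T (dslope f 0 μ) - μ • dslope f 0 μ) (𝓝[≠] (0:ℂ))
        (𝓝 (T (dslope f 0 0) - (0:ℂ) • dslope f 0 0)) :=
      hc.continuousWithinAt.tendsto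
    have ht2 : Tendsto (fun μ : ℂ => T (dslope f 0 μ) - μ • dslope f 0 μ) (𝓝[≠] (0:ℂ))
        (𝓝 (f 0)) := by
      refine Tendsto.congr' ?_ tendsto_const_nhds
      filter_upwards [hmem] with z hz
      exact (hkey z hz.1 (by simpa using hz.2)).symm
    simpa using (tendsto_nhds_unique ht1 ht2)
  · exact hkey μ hμ hμ0

lemma divide_iter {T : E →L[ℂ] E} {F : Set ℂ} (hF : IsClosed F) (h0 : (0:ℂ) ∉ F) (n : ℕ) {z : E}
    (hz : z ∈ glocalSubspace T F) :
    ∃ w ∈ glocalSubspace T F, (fun v => T v)^[n] w = z := by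
  induction n generalizing z with
  | zero => exact ⟨z, hz, rfl⟩
  | succ n ih =>
    obtain ⟨w, hw, hTw⟩ := divide hF h0 hz
    obtain ⟨w', hw', hw'n⟩ := ih hw
    exact ⟨w', hw', by rw [Function.iterate_succ_apply', hw'n, hTw]⟩

lemma iter_sub (T : E →L[ℂ] E) (n : ℕ) (a b : E) :
    (fun v => T v)^[n] (a - b) = (fun v => T v)^[n] a - (fun v => T v)^[n] b := by
  induction n generalizing a b with
  | zero => rfl
  | succ n ih =>
    simp only [Function.iterate_succ_apply', ih, map_sub]

lemma shrink {U₁ U₂ : Set ℂ} (h1 : IsOpen U₁) (h2 : IsOpen U₂) (hc : U₁ ∪ U₂ = univ)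
    (h0 : (0:ℂ) ∈ U₁) :
    ∃ V : Set ℂ, IsOpen V ∧ V ⊆ U₂ ∧ U₁ ∪ V = univ ∧ (0:ℂ) ∉ closure V := by
  obtain ⟨ε, hε, hball⟩ := Metric.isOpen_iff.1 h1 0 h0
  refine ⟨U₂ \ Metric.closedBall 0 (ε/2), h2.sdiff Metric.isClosed_closedBall,
    diff_subset, ?_, ?_⟩
  · apply eq_univ_of_forall
    intro z
    by_cases hz : z ∈ Metric.closedBall 0 (ε/2)
    · left
      apply hball
      have := Metric.mem_closedBall.1 hz
      exact Metric.mem_ball.2 (lt_of_le_of_lt this (by linarith))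
    · have hz2 : z ∈ U₁ ∪ U₂ := hc ▸ mem_univ z
      rcases hz2 with h | h
      · exact Or.inl h
      · exact Or.inr ⟨h, hz⟩
  · intro hcl
    obtain ⟨b, hb, hdist⟩ := Metric.mem_closure_iff.1 hcl (ε/2) (by linarith)
    exact hb.2 (Metric.mem_closedBall.2 (by rw [dist_comm] at hdist; linarith [le_of_lt hdist]))

lemma transfer_key {S : E →L[ℂ] E} {T : E' →L[ℂ] E'} (R : E →L[ℂ] E') (W : E' →L[ℂ] E)
    (hSW : ∀ y, S (W y) = W (T y)) (n : ℕ) (hWR : ∀ x, W (R x) = (fun v => S v)^[n] x)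
    (hT : HasPropertyDelta T) {U₁ U₂ : Set ℂ} (hU₁ : IsOpen U₁) (hU₂ : IsOpen U₂)
    (hc : U₁ ∪ U₂ = univ) (h0 : (0:ℂ) ∈ U₁) (x : E) :
    ∃ x₁ ∈ glocalSubspace S (closure U₁), ∃ x₂ ∈ glocalSubspace S (closure U₂),
      x = x₁ + x₂ := by
  obtain ⟨V, hVo, hVsub, hVc, hV0⟩ := shrink hU₁ hU₂ hc h0
  obtain ⟨y₁, hy₁, y₂, hy₂, hRx⟩ := hT U₁ V hU₁ hVo hVc (R x)
  have hWy₁ : W y₁ ∈ glocalSubspace S (closure U₁) := push hSW hy₁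
  have hWy₂ : W y₂ ∈ glocalSubspace S (closure V) := push hSW hy₂
  obtain ⟨x₂, hx₂, hSx₂⟩ := divide_iter isClosed_closure hV0 n hWy₂
  have hkey : (fun v => S v)^[n] (x - x₂) = W y₁ := by
    rw [iter_sub, ← hWR, hSx₂, hRx, map_add]
    abel
  have hx₁ : x - x₂ ∈ glocalSubspace S (closure U₁) := by
    refine lift_iter (subset_closure h0) n ?_
    rw [hkey]; exact hWy₁
  exact ⟨x - x₂, hx₁, x₂, mono (closure_mono hVsub) hx₂, by abel⟩

lemma transfer {S : E →L[ℂ] E} {T : E' →L[ℂ] E'} (R : E →L[ℂ] E') (W : E' →L[ℂ] E)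
    (hSW : ∀ y, S (W y) = W (T y)) (n : ℕ) (hWR : ∀ x, W (R x) = (fun v => S v)^[n] x)
    (hT : HasPropertyDelta T) : HasPropertyDelta S := by
  intro U₁ U₂ hU₁ hU₂ hc x
  have h0 : (0:ℂ) ∈ U₁ ∪ U₂ := hc ▸ mem_univ 0
  rcases h0 with h0 | h0
  · exact transfer_key R W hSW n hWR hT hU₁ hU₂ hc h0 x
  · obtain ⟨x₁, hx₁, x₂, hx₂, hx⟩ :=
      transfer_key R W hSW n hWR hT hU₂ hU₁ (by rw [union_comm]; exact hc) h0 x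
    exact ⟨x₂, hx₂, x₁, hx₁, by rw [hx, add_comm]⟩

end GDaux

theorem stmt_2 {X Y : Type*} [NormedAddCommGroup X] [NormedSpace ℂ X] [CompleteSpace X]
    [NormedAddCommGroup Y] [NormedSpace ℂ Y] [CompleteSpace Y]
    (A : X →L[ℂ] Y) (B C : Y →L[ℂ] X)
    (h1 : A ∘L B ∘L A ∘L B ∘L A = A ∘L B ∘L A ∘L C ∘L A)
    (h2 : A ∘L B ∘L A ∘L C ∘L A = A ∘L C ∘L A ∘L B ∘L A)
    (h3 : A ∘L C ∘L A ∘L B ∘L A = A ∘L C ∘L A ∘L C ∘L A) :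
    HasPropertyDelta (A ∘L C) ↔ HasPropertyDelta (B ∘L A) := by
  have p1 : ∀ x : X, A (B (A (B (A x)))) = A (B (A (C (A x)))) := fun x => by
    simpa using DFunLike.congr_fun h1 x
  have p2 : ∀ x : X, A (B (A (C (A x)))) = A (C (A (B (A x)))) := fun x => by
    simpa using DFunLike.congr_fun h2 x
  have p3 : ∀ x : X, A (C (A (B (A x)))) = A (C (A (C (A x)))) := fun x => by
    simpa using DFunLike.congr_fun h3 x
  have q : ∀ x : X, A (B (A (B (A x)))) = A (C (A (C (A x)))) :=
    fun x => (p1 x).trans ((p2 x).trans (p3 x))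
  have e : ∀ x : X, A (C (A (B (A x)))) = A (B (A (B (A x)))) :=
    fun x => (p2 x).symm.trans (p1 x).symm
  constructor
  · -- δ(AC) ⇒ δ(BA)
    intro hT
    refine GDaux.transfer (S := B ∘L A) (T := A ∘L C) (A ∘L (B ∘L A))
      (B ∘L (A ∘L (C ∘L (A ∘L C)))) ?_ 4 ?_ hT
    · intro y
      simp only [ContinuousLinearMap.coe_comp', Function.comp_apply]
      exact congrArg B ((p2 (C y)).trans (p3 (C y)))
    · intro x
      simp only [ContinuousLinearMap.coe_comp', Function.comp_apply]
      rw [e x, e (B (A x))]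
      rfl
  · -- δ(BA) ⇒ δ(AC)
    intro hT
    refine GDaux.transfer (S := A ∘L C) (T := B ∘L A) (B ∘L (A ∘L C))
      (A ∘L (B ∘L A)) ?_ 3 ?_ hT
    · intro x
      simp only [ContinuousLinearMap.coe_comp', Function.comp_apply]
      exact e x
    · intro y
      simp only [ContinuousLinearMap.coe_comp', Function.comp_apply]
      rw [q (C y)]
      rfl
end

section
/- Let X and Y be complex Banach spaces, A : X → Y and B, C : Y → X bounded linear operators satisfying A(BA)² = ABACA = ACABA = (AC)²A. Then for every x ∈ X: σ_{AC}(ABAx) ⊆ σ_{BA}(x) ⊆ σ_{AC}(ABAx) ∪ {0}. -/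
open ContinuousLinearMap Filter Topology Set

/-- The local spectrum `σ_T(x)` : the complement of the set of `λ ∈ ℂ` for which
there exist an open neighborhood `U` of `λ` and an analytic `f : U → E` with
`(T - μ) f μ = x` on `U`. -/
def localSpectrum {E : Type*} [NormedAddCommGroup E] [NormedSpace ℂ E]
    (T : E →L[ℂ] E) (x : E) : Set ℂ :=
  {lam | ¬ ∃ U : Set ℂ, IsOpen U ∧ lam ∈ U ∧
    ∃ f : ℂ → E, AnalyticOnNhd ℂ f U ∧ ∀ mu ∈ U, T (f mu) - mu • f mu = x}

theorem stmt_5 {X Y : Type*} [NormedAddCommGroup X] [NormedSpace ℂ X] [CompleteSpace X]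
    [NormedAddCommGroup Y] [NormedSpace ℂ Y] [CompleteSpace Y]
    (A : X →L[ℂ] Y) (B C : Y →L[ℂ] X)
    (h1 : A ∘L B ∘L A ∘L B ∘L A = A ∘L B ∘L A ∘L C ∘L A)
    (h2 : A ∘L B ∘L A ∘L C ∘L A = A ∘L C ∘L A ∘L B ∘L A)
    (h3 : A ∘L C ∘L A ∘L B ∘L A = A ∘L C ∘L A ∘L C ∘L A)
    (x : X) :
    localSpectrum (A ∘L C) ((A ∘L B ∘L A) x) ⊆ localSpectrum (B ∘L A) x ∧
    localSpectrum (B ∘L A) x ⊆ localSpectrum (A ∘L C) ((A ∘L B ∘L A) x) ∪ {0} := by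
  have h1' : ∀ z : X, A (B (A (B (A z)))) = A (B (A (C (A z)))) := fun z => by
    have := DFunLike.congr_fun h1 z
    simpa only [ContinuousLinearMap.comp_apply] using this
  have h12 : ∀ z : X, A (C (A (B (A z)))) = A (B (A (B (A z)))) := fun z => by
    have := DFunLike.congr_fun (h2.symm.trans h1.symm) z
    simpa only [ContinuousLinearMap.comp_apply] using this
  constructor
  · -- σ_{AC}(ABAx) ⊆ σ_{BA}(x)
    intro lam hlam
    simp only [localSpectrum, mem_setOf_eq] at hlam ⊢
    intro hcon
    apply hlam
    obtain ⟨U, hU, hlamU, f, hf, hfe⟩ := hcon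
    refine ⟨U, hU, hlamU, fun mu => (A ∘L B ∘L A) (f mu),
      (A ∘L B ∘L A).comp_analyticOnNhd hf, fun mu hmu => ?_⟩
    have hfx : B (A (f mu)) - mu • f mu = x := by
      simpa only [ContinuousLinearMap.comp_apply] using hfe mu hmu
    simp only [ContinuousLinearMap.comp_apply]
    calc A (C (A (B (A (f mu))))) - mu • A (B (A (f mu)))
        = A (B (A (B (A (f mu))))) - mu • A (B (A (f mu))) := by rw [h12]
      _ = A (B (A (B (A (f mu)) - mu • f mu))) := by
          simp only [map_sub, map_smul]
      _ = A (B (A x)) := by rw [hfx]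
  · -- σ_{BA}(x) ⊆ σ_{AC}(ABAx) ∪ {0}
    intro lam hlam
    rw [mem_union, mem_singleton_iff]
    by_cases h0 : lam = 0
    · exact Or.inr h0
    refine Or.inl ?_
    simp only [localSpectrum, mem_setOf_eq] at hlam ⊢
    intro hcon
    apply hlam
    obtain ⟨U, hU, hlamU, g, hg, hge⟩ := hcon
    refine ⟨U \ {0}, hU.sdiff isClosed_singleton, ⟨hlamU, h0⟩,
      fun mu => (mu ^ 3)⁻¹ • B (A (B (g mu))) - mu⁻¹ • x - (mu ^ 2)⁻¹ • B (A x)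
        - (mu ^ 3)⁻¹ • B (A (B (A x))), ?_, fun mu hmu => ?_⟩
    · -- analyticity
      have hne : ∀ mu ∈ U \ ({0} : Set ℂ), mu ≠ 0 := fun mu hmu => hmu.2
      have hid : AnalyticOnNhd ℂ (fun mu : ℂ => mu) (U \ {0}) :=
        fun z _ => analyticAt_id
      have h3inv : AnalyticOnNhd ℂ (fun mu : ℂ => (mu ^ 3)⁻¹) (U \ {0}) :=
        (hid.pow 3).inv (fun mu hmu => pow_ne_zero _ (hne mu hmu))
      have h2inv : AnalyticOnNhd ℂ (fun mu : ℂ => (mu ^ 2)⁻¹) (U \ {0}) :=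
        (hid.pow 2).inv (fun mu hmu => pow_ne_zero _ (hne mu hmu))
      have h1inv : AnalyticOnNhd ℂ (fun mu : ℂ => mu⁻¹) (U \ {0}) :=
        hid.inv hne
      have hBABg : AnalyticOnNhd ℂ (fun mu => B (A (B (g mu)))) (U \ {0}) :=
        (B ∘L A ∘L B).comp_analyticOnNhd (hg.mono diff_subset)
      exact (((h3inv.smul hBABg).sub (h1inv.smul analyticOnNhd_const)).sub
        (h2inv.smul analyticOnNhd_const)).sub (h3inv.smul analyticOnNhd_const)
    · -- the functional equation
      have hmune : mu ≠ 0 := hmu.2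
      have eAC : A (C (g mu)) = mu • g mu + A (B (A x)) := by
        have h' := hge mu hmu.1
        simp only [ContinuousLinearMap.comp_apply] at h'
        rw [sub_eq_iff_eq_add] at h'
        rw [h', add_comm]
      have w1 : A (B (A (B (A (C (g mu)))))) =
          mu • A (B (A (B (g mu)))) + A (B (A (B (A (B (A x)))))) := by
        rw [eAC]; simp only [map_add, map_smul]
      have w2 : A (B (A (B (A (C (g mu)))))) =
          (mu * mu) • A (B (g mu)) + mu • A (B (A (B (A x))))
            + A (B (A (B (A (B (A x)))))) := by
        rw [h1' (C (g mu)), eAC]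
        simp only [map_add, map_smul]
        rw [eAC, ← h1' (B (A x))]
        simp only [map_add, map_smul, smul_smul]
        module
      have key : A (B (A (B (g mu)))) = mu • A (B (g mu)) + A (B (A (B (A x)))) := by
        apply smul_right_injective Y hmune
        have h12' := w1.symm.trans w2
        simp only [smul_add, smul_smul]
        have := add_right_cancel h12'
        rw [this]
      have keyB : B (A (B (A (B (g mu))))) =
          mu • B (A (B (g mu))) + B (A (B (A (B (A x))))) := by
        have := congrArg (fun v => B v) key
        simpa only [map_add, map_smul] using this
      simp only [ContinuousLinearMap.comp_apply, map_sub, map_smul]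
      rw [keyB]
      match_scalars
      all_goals field_simp
      all_goals ring
end

section
/- Let X and Y be complex Banach spaces, A : X → Y and B, C : Y → X bounded linear operators satisfying A(BA)² = ABACA = ACABA = (AC)²A. Then for every x ∈ Y: σ_{BA}(BACACx) ⊆ σ_{AC}(x) ⊆ σ_{BA}(BACACx) ∪ {0}. -/
open ContinuousLinearMap Filter Topology Set

theorem stmt_6 {X Y : Type*} [NormedAddCommGroup X] [NormedSpace ℂ X] [CompleteSpace X]
    [NormedAddCommGroup Y] [NormedSpace ℂ Y] [CompleteSpace Y]
    (A : X →L[ℂ] Y) (B C : Y →L[ℂ] X)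
    (h1 : A ∘L B ∘L A ∘L B ∘L A = A ∘L B ∘L A ∘L C ∘L A)
    (h2 : A ∘L B ∘L A ∘L C ∘L A = A ∘L C ∘L A ∘L B ∘L A)
    (h3 : A ∘L C ∘L A ∘L B ∘L A = A ∘L C ∘L A ∘L C ∘L A)
    (x : Y) :
    localSpectrum (B ∘L A) ((B ∘L A ∘L C ∘L A ∘L C) x) ⊆ localSpectrum (A ∘L C) x ∧
    localSpectrum (A ∘L C) x ⊆ localSpectrum (B ∘L A) ((B ∘L A ∘L C ∘L A ∘L C) x) ∪ {0} := by
  -- Pointwise versions of the operator identities.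
  have key1 : ∀ v : X, A (B (A (C (A v)))) = A (C (A (C (A v)))) := by
    intro v
    have h := DFunLike.congr_fun (h2.trans h3) v
    simpa using h
  have key2 : ∀ v : X, A (C (A (B (A v)))) = A (C (A (C (A v)))) := by
    intro v
    have h := DFunLike.congr_fun h3 v
    simpa using h
  constructor
  · -- σ_{BA}(BACACx) ⊆ σ_{AC}(x)
    intro lam hlam hres
    apply hlam
    obtain ⟨U, hU, hlU, f, hf, hfx⟩ := hres
    refine ⟨U, hU, hlU, fun μ => B (A (C (A (C (f μ))))), ?_, ?_⟩
    · intro μ hμ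
      exact ((B ∘L A ∘L C ∘L A ∘L C).analyticAt (f μ)).comp (hf μ hμ)
    · intro μ hμ
      have hx := hfx μ hμ
      simp only [comp_apply] at hx ⊢
      rw [key1 (C (f μ)), ← hx]
      simp [map_sub, map_smul]
  · -- σ_{AC}(x) ⊆ σ_{BA}(BACACx) ∪ {0}
    intro lam hlam
    by_contra hc
    simp only [mem_union, not_or] at hc
    obtain ⟨hc1, hc2⟩ := hc
    have hl0 : lam ≠ 0 := by simpa using hc2
    rw [localSpectrum, mem_setOf_eq, not_not] at hc1
    obtain ⟨U, hU, hlU, g, hg, hgy⟩ := hc1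
    apply hlam
    set s1 : Y := A (C x) with hs1
    set s2 : Y := A (C s1) with hs2
    set s3 : Y := A (C s2) with hs3
    refine ⟨U ∩ {0}ᶜ, hU.inter isOpen_compl_singleton, ⟨hlU, hl0⟩,
      fun μ => (μ ^ 4)⁻¹ • (A (C (A (g μ))) - s3 - μ • s2 - μ ^ 2 • s1 - μ ^ 3 • x), ?_, ?_⟩
    · intro μ hμ
      have hμ0 : μ ≠ 0 := hμ.2
      have hinv : AnalyticAt ℂ (fun w : ℂ => (w ^ 4)⁻¹) μ :=
        ((analyticAt_id).pow 4).inv (pow_ne_zero 4 hμ0)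
      have hACAg : AnalyticAt ℂ (fun w => A (C (A (g w)))) μ :=
        ((A ∘L C ∘L A).analyticAt (g μ)).comp (hg μ hμ.1)
      exact hinv.smul ((((hACAg.sub analyticAt_const).sub
        ((analyticAt_id).smul analyticAt_const)).sub
        (((analyticAt_id).pow 2).smul analyticAt_const)).sub
        (((analyticAt_id).pow 3).smul analyticAt_const))
    · intro μ hμ
      have hμ0 : μ ≠ 0 := hμ.2
      have hμ4 : (μ : ℂ) ^ 4 ≠ 0 := pow_ne_zero 4 hμ0
      have hBA : B (A (g μ)) = μ • g μ + B (A (C (A (C x)))) := by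
        have h := hgy μ hμ.1
        simp only [comp_apply] at h
        rw [← h]; abel
      -- key computation: ACACA g = μ • ACA g + S⁴ x
      have h5 : A (C (A (C (A (g μ))))) = μ • A (C (A (g μ))) + A (C s3) := by
        rw [← key2 (g μ), hBA]
        simp only [map_add, map_smul]
        rw [key2 (C (A (C x)))]
      simp only [comp_apply]
      set w : Y := A (C (A (g μ))) - s3 - μ • s2 - μ ^ 2 • s1 - μ ^ 3 • x with hw
      have hmain : A (C w) - μ • w = (μ ^ 4) • x := by
        rw [hw]
        simp only [map_sub, map_smul]
        rw [h5, ← hs1, ← hs2, ← hs3]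
        module
      calc A (C ((μ ^ 4)⁻¹ • w)) - μ • (μ ^ 4)⁻¹ • w
          = (μ ^ 4)⁻¹ • (A (C w) - μ • w) := by simp only [map_smul]; module
        _ = (μ ^ 4)⁻¹ • ((μ ^ 4) • x) := by rw [hmain]
        _ = x := by rw [smul_smul, inv_mul_cancel₀ hμ4, one_smul]
end

section
/- Let X and Y be complex Banach spaces, A : X → Y and B, C : Y → X bounded linear operators satisfying A(BA)² = ABACA = ACABA = (AC)²A, and let F be a closed subset of ℂ with 0 ∈ F. Then the local spectral subspace Y_{AC}(F) is closed in Y if and only if the local spectral subspace X_{BA}(F) is closed in X. -/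
open ContinuousLinearMap Filter Topology Set

/-- The local spectral subspace `X_T(F) = {x : σ_T(x) ⊆ F}`. -/
def localSubspace {E : Type*} [NormedAddCommGroup E] [NormedSpace ℂ E]
    (T : E →L[ℂ] E) (F : Set ℂ) : Set E :=
  {x | localSpectrum T x ⊆ F}

lemma locSpec_intertwine {X Y : Type*} [NormedAddCommGroup X] [NormedSpace ℂ X]
    [NormedAddCommGroup Y] [NormedSpace ℂ Y]
    (T : X →L[ℂ] X) (S : Y →L[ℂ] Y) (R : X →L[ℂ] Y)
    (h : ∀ z, S (R z) = R (T z)) (x : X) :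
    localSpectrum S (R x) ⊆ localSpectrum T x := by
  intro lam hl
  by_contra hc
  simp only [localSpectrum, mem_setOf_eq, not_not] at hc
  obtain ⟨U, hU, hlU, f, hf, hfx⟩ := hc
  refine hl ⟨U, hU, hlU, fun mu => R (f mu), R.comp_analyticOnNhd hf, fun mu hmu => ?_⟩
  rw [h, ← map_smul, ← map_sub, hfx mu hmu]

lemma locSpec_rev {X Y : Type*} [NormedAddCommGroup X] [NormedSpace ℂ X]
    [NormedAddCommGroup Y] [NormedSpace ℂ Y]
    (T : X →L[ℂ] X) (S : Y →L[ℂ] Y) (R : X →L[ℂ] Y) (V : Y →L[ℂ] X)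
    (hTV : ∀ y, T (V y) = V (S y)) (hVR : ∀ z, V (R z) = T (T (T (T z))))
    (x : X) :
    localSpectrum T x ⊆ localSpectrum S (R x) ∪ {0} := by
  intro lam hl
  by_contra hc
  simp only [mem_union, mem_singleton_iff, not_or] at hc
  obtain ⟨hc1, hc0⟩ := hc
  simp only [localSpectrum, mem_setOf_eq, not_not] at hc1
  obtain ⟨U, hU, hlU, h, hh, hhx⟩ := hc1
  set U' : Set ℂ := U ∩ {z | z ≠ 0} with hU'
  have hU'open : IsOpen U' := hU.inter (isOpen_compl_singleton)
  have hlU' : lam ∈ U' := ⟨hlU, hc0⟩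
  set f : ℂ → X := fun mu => (mu ^ 4)⁻¹ • V (h mu) - (mu ^ 4)⁻¹ • T (T (T x))
      - (mu ^ 3)⁻¹ • T (T x) - (mu ^ 2)⁻¹ • T x - mu⁻¹ • x with hf
  have hinv : ∀ k : ℕ, AnalyticOnNhd ℂ (fun mu : ℂ => (mu ^ k)⁻¹) U' := by
    intro k
    exact (analyticOnNhd_id.pow k).inv (fun z hz => pow_ne_zero k hz.2)
  have hfa : AnalyticOnNhd ℂ f U' := by
    have h1 : AnalyticOnNhd ℂ (fun mu => V (h mu)) U' :=
      V.comp_analyticOnNhd (hh.mono inter_subset_left)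
    refine (((((hinv 4).smul h1).sub ((hinv 4).smul analyticOnNhd_const)).sub
      ((hinv 3).smul analyticOnNhd_const)).sub
      ((hinv 2).smul analyticOnNhd_const)).sub ?_
    simpa using (hinv 1).smul (analyticOnNhd_const (v := x))
  refine hl ⟨U', hU'open, hlU', f, hfa, fun mu hmu => ?_⟩
  have hmu0 : mu ≠ 0 := hmu.2
  have key : T (V (h mu)) = T (T (T (T x))) + mu • V (h mu) := by
    have h1 : S (h mu) = R x + mu • h mu := by
      have := hhx mu hmu.1; rw [sub_eq_iff_eq_add] at this; exact this
    rw [hTV, h1, map_add, map_smul, hVR]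
  rw [hf]
  simp only [map_sub, map_smul, key]
  rw [sub_eq_iff_eq_add]
  match_scalars <;> field_simp <;> ring

theorem stmt_8 {X Y : Type*} [NormedAddCommGroup X] [NormedSpace ℂ X] [CompleteSpace X]
    [NormedAddCommGroup Y] [NormedSpace ℂ Y] [CompleteSpace Y]
    (A : X →L[ℂ] Y) (B C : Y →L[ℂ] X)
    (h1 : A ∘L B ∘L A ∘L B ∘L A = A ∘L B ∘L A ∘L C ∘L A)
    (h2 : A ∘L B ∘L A ∘L C ∘L A = A ∘L C ∘L A ∘L B ∘L A)
    (h3 : A ∘L C ∘L A ∘L B ∘L A = A ∘L C ∘L A ∘L C ∘L A)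
    (F : Set ℂ) (hF : IsClosed F) (h0 : (0 : ℂ) ∈ F) :
    IsClosed (localSubspace (A ∘L C) F) ↔ IsClosed (localSubspace (B ∘L A) F) := by
  have h1' : ∀ z, A (B (A (B (A z)))) = A (B (A (C (A z)))) := fun z => by
    simpa using DFunLike.congr_fun h1 z
  have h2' : ∀ z, A (B (A (C (A z)))) = A (C (A (B (A z)))) := fun z => by
    simpa using DFunLike.congr_fun h2 z
  have h3' : ∀ z, A (C (A (B (A z)))) = A (C (A (C (A z)))) := fun z => by
    simpa using DFunLike.congr_fun h3 z
  -- chain: ABABA = ACACA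
  have w13 : ∀ z, A (B (A (B (A z)))) = A (C (A (C (A z)))) := fun z =>
    (h1' z).trans ((h2' z).trans (h3' z))
  set R : X →L[ℂ] Y := A ∘L B ∘L A with hR
  set V : Y →L[ℂ] X := B ∘L A ∘L B ∘L A ∘L C with hV
  set T : X →L[ℂ] X := B ∘L A with hT
  set S : Y →L[ℂ] Y := A ∘L C with hS
  have e1 : ∀ z, S (R z) = R (T z) := fun z => by
    simp only [hR, hS, hT, comp_apply]
    exact (h2' z).symm.trans (h1' z).symm
  have e2 : ∀ y, T (V y) = V (S y) := fun y => by
    simp only [hR, hS, hT, hV, comp_apply]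
    exact congrArg B (h1' (C y))
  have e3 : ∀ z, V (R z) = T (T (T (T z))) := fun z => by
    simp only [hR, hT, hV, comp_apply]
    exact congrArg (fun w => B (A (B w)))
      ((h2' z).symm.trans (h1' z).symm)
  have e4 : ∀ y, R (V y) = S (S (S (S y))) := fun y => by
    simp only [hR, hS, hV, comp_apply]
    exact (h1' (B (A (C y)))).trans ((h2' (B (A (C y)))).trans
      (congrArg (fun w => A (C w)) (w13 (C y))))
  constructor
  · intro hY
    have hset : localSubspace T F = R ⁻¹' (localSubspace S F) := by
      ext x
      simp only [localSubspace, mem_setOf_eq, mem_preimage]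
      constructor
      · intro hx
        exact (locSpec_intertwine T S R e1 x).trans hx
      · intro hx
        refine (locSpec_rev T S R V e2 e3 x).trans (union_subset hx ?_)
        simpa using h0
    rw [hset]
    exact hY.preimage R.continuous
  · intro hX
    have hset : localSubspace S F = V ⁻¹' (localSubspace T F) := by
      ext y
      simp only [localSubspace, mem_setOf_eq, mem_preimage]
      constructor
      · intro hy
        exact (locSpec_intertwine S T V e2 y).trans hy
      · intro hy
        refine (locSpec_rev S T V R e1 e4 y).trans (union_subset hy ?_)
        simpa using h0
    rw [hset]
    exact hX.preimage V.continuous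
end

section
/- Let X and Y be complex Banach spaces, A : X → Y and B, C : Y → X bounded linear operators satisfying A(BA)² = ABACA = ACABA = (AC)²A, suppose AC has the single valued extension property, and let F be a closed subset of ℂ with 0 ∉ F. If the local spectral subspace Y_{AC}(F ∪ {0}) is closed in Y, then the local spectral subspace X_{BA}(F) is closed in X. -/
/-!
The identities `A(BA)² = ABACA` and `ACABA = (AC)²A` transfer local resolvent functions between
`BA` and `AC`: from a solution `f` of `(BA - μ) f(μ) = x` one gets the solution
`A f(μ) - μ⁻¹ (AB - AC) A f(μ)` of `(AC - μ) g(μ) = A x`, and from a solution `g` of the latter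
the solution `BAB g(μ)` of `(BA - μ) h(μ) = (BA)² x`, away from `0`. Hence `BA` inherits the SVEP,
the local spectra `σ_BA(x)` and `σ_AC(A x)` agree off `0`, and `X_BA(F ∪ {0})` is the preimage
under `A` of the closed subspace `Y_AC(F ∪ {0})`.

It remains to remove the point `0`. For `T` with the SVEP, `T - μ` is invertible on the Banach
space `M = X_T(F ∪ {λ})` for `μ ∉ F ∪ {λ}`. If `xₙ → x` in `X_T(F)`, the local resolvent functions
`gₙ` of `xₙ` on a disc around `λ` missing `F` take values in `M`, so on a circle around `λ` they
are controlled by `‖xₙ - xₘ‖` through the inverses of `T - μ`; by the maximum principle they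
converge uniformly on the disc, and their limit is a local resolvent function of `x` at `λ`.
-/

open ContinuousLinearMap Filter Topology Set

/-- `T` has the single valued extension property. -/
def HasSVEP {E : Type*} [NormedAddCommGroup E] [NormedSpace ℂ E]
    (T : E →L[ℂ] E) : Prop :=
  ∀ lam : ℂ, HasSVEPAt T lam

theorem eqOn_of_eqOn_diff_singleton {β : Type*} [TopologicalSpace β] [T2Space β] {f g : ℂ → β}
    {U : Set ℂ} {lam : ℂ} (hU : IsOpen U) (hf : ContinuousOn f U) (hg : ContinuousOn g U)
    (h : EqOn f g (U \ {lam})) : EqOn f g U :=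
  h.of_subset_closure hf hg sdiff_subset ((dense_compl_singleton lam).open_subset_closure_inter hU)

theorem norm_le_of_forall_mem_sphere_norm_le {E : Type*} [NormedAddCommGroup E] [NormedSpace ℂ E]
    {h : ℂ → E} {c : ℂ} {r K : ℝ} (hr : 0 < r) (hh : DifferentiableOn ℂ h (Metric.closedBall c r))
    (hK : ∀ μ ∈ Metric.sphere c r, ‖h μ‖ ≤ K) {μ : ℂ} (hμ : μ ∈ Metric.closedBall c r) :
    ‖h μ‖ ≤ K := by
  rw [← closure_ball c hr.ne'] at hh hμ
  exact Complex.norm_le_of_forall_mem_frontier_norm_le Metric.isBounded_ball hh.diffContOnCl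
    (by rwa [frontier_ball c hr.ne']) hμ

theorem uniformCauchySeqOn_of_norm_sub_le {α E F : Type*} [SeminormedAddCommGroup E]
    [SeminormedAddCommGroup F] {g : ℕ → α → E} {xs : ℕ → F} {s : Set α} {C : ℝ}
    (hx : CauchySeq xs) (h : ∀ n m, ∀ μ ∈ s, ‖g n μ - g m μ‖ ≤ C * ‖xs n - xs m‖) :
    UniformCauchySeqOn g atTop s := by
  refine Metric.uniformCauchySeqOn_iff.2 fun ε hε => ?_
  obtain ⟨N, hN⟩ := Metric.cauchySeq_iff.1 hx (ε / (|C| + 1)) (by positivity)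
  refine ⟨N, fun m hm n hn μ hμ => ?_⟩
  have hxmn := hN m hm n hn
  rw [dist_eq_norm] at hxmn ⊢
  calc ‖g m μ - g n μ‖ ≤ C * ‖xs m - xs n‖ := h m n μ hμ
    _ ≤ |C| * (ε / (|C| + 1)) := mul_le_mul (le_abs_self C) hxmn.le (norm_nonneg _) (abs_nonneg C)
    _ < ε := by
      rw [mul_div_assoc', div_lt_iff₀ (by positivity)]
      nlinarith [abs_nonneg C]

theorem exists_norm_resolvent_le {A : Type*} [NormedRing A] [NormedAlgebra ℂ A] [CompleteSpace A]
    {a : A} {K : Set ℂ} (hK : IsCompact K) (hKa : K ⊆ resolventSet ℂ a) :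
    ∃ C, ∀ μ ∈ K, ‖resolvent a μ‖ ≤ C :=
  hK.exists_bound_of_continuousOn fun _ hμ =>
    (spectrum.hasDerivAt_resolvent_const_left (hKa hμ)).continuousAt.continuousWithinAt

theorem norm_le_norm_resolvent_mul {M : Type*} [NormedAddCommGroup M] [NormedSpace ℂ M]
    {S : M →L[ℂ] M} {μ : ℂ} (hμ : μ ∈ resolventSet ℂ S) (w : M) :
    ‖w‖ ≤ ‖resolvent S μ‖ * ‖S w - μ • w‖ :=
  calc ‖w‖ = ‖resolvent S μ ((algebraMap ℂ (M →L[ℂ] M) μ - S) w)‖ := by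
        rw [← mul_apply_eq_comp, resolvent, Ring.inverse_mul_cancel _ hμ,
          one_apply_eq_self]
    _ ≤ ‖resolvent S μ‖ * ‖(algebraMap ℂ (M →L[ℂ] M) μ - S) w‖ := le_opNorm _ _
    _ = ‖resolvent S μ‖ * ‖S w - μ • w‖ := by
        rw [Algebra.algebraMap_eq_smul_one, sub_apply, smul_apply, one_apply_eq_self,
          norm_sub_rev]

section LocalResolvent

variable {E : Type*} [NormedAddCommGroup E] [NormedSpace ℂ E]

structure IsLocalResolvent (T : E →L[ℂ] E) (x : E) (f : ℂ → E) (U : Set ℂ) : Prop where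
  differentiableOn : DifferentiableOn ℂ f U
  apply_sub_smul : ∀ μ ∈ U, T (f μ) - μ • f μ = x

variable {T : E →L[ℂ] E} {x y v : E} {f g : ℂ → E} {U : Set ℂ} {lam : ℂ}

theorem isLocalResolvent_zero : IsLocalResolvent T 0 0 U :=
  ⟨differentiableOn_const 0, fun _ _ => by simp⟩

namespace IsLocalResolvent

theorem mono (hf : IsLocalResolvent T x f U) {V : Set ℂ} (hVU : V ⊆ U) :
    IsLocalResolvent T x f V :=
  ⟨hf.differentiableOn.mono hVU, fun μ hμ => hf.apply_sub_smul μ (hVU hμ)⟩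

theorem add (hf : IsLocalResolvent T x f U) (hg : IsLocalResolvent T y g U) :
    IsLocalResolvent T (x + y) (f + g) U := by
  refine ⟨hf.differentiableOn.add hg.differentiableOn, fun μ hμ => ?_⟩
  rw [← hf.apply_sub_smul μ hμ, ← hg.apply_sub_smul μ hμ, Pi.add_apply, map_add, smul_add]
  abel

theorem sub (hf : IsLocalResolvent T x f U) (hg : IsLocalResolvent T y g U) :
    IsLocalResolvent T (x - y) (f - g) U := by
  refine ⟨hf.differentiableOn.sub hg.differentiableOn, fun μ hμ => ?_⟩
  rw [← hf.apply_sub_smul μ hμ, ← hg.apply_sub_smul μ hμ, Pi.sub_apply, map_sub, smul_sub]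
  abel

theorem smul (hf : IsLocalResolvent T x f U) (c : ℂ) : IsLocalResolvent T (c • x) (c • f) U :=
  ⟨hf.differentiableOn.const_smul c, fun μ hμ => by
    rw [← hf.apply_sub_smul μ hμ, Pi.smul_apply, map_smul, smul_comm μ c, smul_sub]⟩

theorem map (hf : IsLocalResolvent T x f U) : IsLocalResolvent T (T x) (fun μ => T (f μ)) U :=
  ⟨T.differentiable.comp_differentiableOn hf.differentiableOn, fun μ hμ => by
    rw [← map_smul, ← map_sub, hf.apply_sub_smul μ hμ]⟩

theorem slope (hf : IsLocalResolvent T x f U) (hv : T v - lam • v = x) :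
    IsLocalResolvent T v (fun μ => (μ - lam)⁻¹ • (f μ - v)) (U \ {lam}) := by
  refine ⟨((differentiableOn_id.sub_const lam).inv fun μ hμ => sub_ne_zero.2 hμ.2).smul
    ((hf.differentiableOn.mono sdiff_subset).sub_const v), fun μ hμ => ?_⟩
  have hne : μ - lam ≠ 0 := sub_ne_zero.2 hμ.2
  rw [map_smul, smul_comm μ, ← smul_sub, map_sub,
    show T (f μ) - T v - μ • (f μ - v) = (T (f μ) - μ • f μ) - (T v - lam • v) + (μ - lam) • v by
      rw [smul_sub, sub_smul]; abel,
    hf.apply_sub_smul μ hμ.1, hv, sub_self, zero_add, smul_smul, inv_mul_cancel₀ hne, one_smul]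

theorem of_diff_singleton (hU : IsOpen U) (hd : DifferentiableOn ℂ f U)
    (hf : IsLocalResolvent T x f (U \ {lam})) : IsLocalResolvent T x f U :=
  ⟨hd, eqOn_of_eqOn_diff_singleton hU ((T.continuous.comp_continuousOn hd.continuousOn).sub
    (continuousOn_id.smul hd.continuousOn)) continuousOn_const hf.apply_sub_smul⟩

theorem dslope [CompleteSpace E] (hU : IsOpen U) (hf : IsLocalResolvent T x f U) (hlam : lam ∈ U) :
    IsLocalResolvent T (f lam) (_root_.dslope f lam) U := by
  have hd : DifferentiableOn ℂ (_root_.dslope f lam) U :=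
    (Complex.differentiableOn_dslope (hU.mem_nhds hlam)).2 hf.differentiableOn
  refine of_diff_singleton (lam := lam) hU hd ⟨hd.mono sdiff_subset, fun μ hμ => ?_⟩
  rw [dslope_of_ne f hμ.2, slope_def_module]
  exact (hf.slope (hf.apply_sub_smul lam hlam)).apply_sub_smul μ hμ

end IsLocalResolvent

theorem norm_le_of_apply_sub_smul_eq (h : T v - lam • v = x) (hlam : ‖T‖ + 1 ≤ ‖lam‖) :
    ‖v‖ ≤ ‖x‖ := by
  have hb : ‖lam‖ * ‖v‖ ≤ ‖T‖ * ‖v‖ + ‖x‖ :=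
    calc ‖lam‖ * ‖v‖ = ‖T v - x‖ := by rw [← norm_smul, ← h, sub_sub_cancel]
      _ ≤ ‖T v‖ + ‖x‖ := norm_sub_le _ _
      _ ≤ ‖T‖ * ‖v‖ + ‖x‖ := by gcongr; exact T.le_opNorm v
  nlinarith [norm_nonneg v]

theorem exists_isLocalResolvent_of_notMem_localSpectrum (h : lam ∉ localSpectrum T x) :
    ∃ U : Set ℂ, IsOpen U ∧ lam ∈ U ∧ ∃ f, IsLocalResolvent T x f U := by
  obtain ⟨U, hU, hlam, f, hf, he⟩ := not_not.1 h
  exact ⟨U, hU, hlam, f, hf.differentiableOn, he⟩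

end LocalResolvent

section LocalSpectrum

variable {E : Type*} [NormedAddCommGroup E] [NormedSpace ℂ E] [CompleteSpace E]
  {T : E →L[ℂ] E} {x v : E} {f g : ℂ → E} {U : Set ℂ} {lam : ℂ}

theorem IsLocalResolvent.notMem_localSpectrum (hf : IsLocalResolvent T x f U) (hU : IsOpen U)
    (hlam : lam ∈ U) : lam ∉ localSpectrum T x :=
  not_not.2 ⟨U, hU, hlam, f, hf.differentiableOn.analyticOnNhd hU, hf.apply_sub_smul⟩

theorem localSpectrum_zero : localSpectrum T 0 = ∅ :=
  eq_empty_of_forall_notMem fun _ => isLocalResolvent_zero.notMem_localSpectrum isOpen_univ trivial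

theorem localSpectrum_add_subset (x y : E) :
    localSpectrum T (x + y) ⊆ localSpectrum T x ∪ localSpectrum T y := by
  intro lam hlam
  by_contra hc
  obtain ⟨hx, hy⟩ := not_or.1 hc
  obtain ⟨U, hU, hlU, f, hf⟩ := exists_isLocalResolvent_of_notMem_localSpectrum hx
  obtain ⟨V, hV, hlV, g, hg⟩ := exists_isLocalResolvent_of_notMem_localSpectrum hy
  exact ((hf.mono inter_subset_left).add (hg.mono inter_subset_right)).notMem_localSpectrum
    (hU.inter hV) ⟨hlU, hlV⟩ hlam

theorem localSpectrum_smul_subset (c : ℂ) (x : E) :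
    localSpectrum T (c • x) ⊆ localSpectrum T x := by
  intro lam hlam
  by_contra hx
  obtain ⟨U, hU, hlU, f, hf⟩ := exists_isLocalResolvent_of_notMem_localSpectrum hx
  exact (hf.smul c).notMem_localSpectrum hU hlU hlam

theorem localSpectrum_apply_subset (x : E) : localSpectrum T (T x) ⊆ localSpectrum T x := by
  intro lam hlam
  by_contra hx
  obtain ⟨U, hU, hlU, f, hf⟩ := exists_isLocalResolvent_of_notMem_localSpectrum hx
  exact hf.map.notMem_localSpectrum hU hlU hlam

theorem notMem_localSpectrum_of_notMem_apply (hlam : lam ≠ 0)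
    (h : lam ∉ localSpectrum T (T x)) : lam ∉ localSpectrum T x := by
  obtain ⟨U, hU, hlU, f, hf⟩ := exists_isLocalResolvent_of_notMem_localSpectrum h
  exact (hf.slope (lam := 0) (by rw [zero_smul, sub_zero])).notMem_localSpectrum
    (hU.sdiff isClosed_singleton) ⟨hlU, hlam⟩

theorem localSpectrum_subset_of_apply_eq_smul (h : T v = lam • v) :
    localSpectrum T v ⊆ {lam} := by
  intro ν hν
  by_contra hne
  exact (isLocalResolvent_zero.slope (by rw [h, sub_self])).notMem_localSpectrum
      (isOpen_univ.sdiff isClosed_singleton) ⟨mem_univ ν, hne⟩ hν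

theorem IsLocalResolvent.localSpectrum_apply_subset (hU : IsOpen U) (hf : IsLocalResolvent T x f U)
    (hlam : lam ∈ U) : localSpectrum T (f lam) ⊆ localSpectrum T x := by
  intro ν hν
  by_contra hx
  by_cases hνl : ν = lam
  · subst hνl
    exact (hf.dslope hU hlam).notMem_localSpectrum hU hlam hν
  · obtain ⟨V, hV, hνV, g, hg⟩ := exists_isLocalResolvent_of_notMem_localSpectrum hx
    exact (hg.slope (hf.apply_sub_smul lam hlam)).notMem_localSpectrum
      (hV.sdiff isClosed_singleton) ⟨hνV, hνl⟩ hν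

theorem hasSVEP_iff :
    HasSVEP T ↔ ∀ U : Set ℂ, IsOpen U → ∀ f, IsLocalResolvent T 0 f U → EqOn f 0 U := by
  refine ⟨fun h U hU f hf μ hμ => ?_,
    fun h _ => ⟨1, one_pos, fun U _ hU f hf he => h U hU f ⟨hf.differentiableOn, he⟩⟩⟩
  obtain ⟨r, hr, hP⟩ := h μ
  have hUr : IsOpen (U ∩ Metric.ball μ r) := hU.inter Metric.isOpen_ball
  exact hP _ inter_subset_right hUr f
    ((hf.differentiableOn.mono inter_subset_left).analyticOnNhd hUr)
    (fun ν hν => hf.apply_sub_smul ν hν.1) μ ⟨hμ, Metric.mem_ball_self hr⟩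

theorem HasSVEP.eqOn (h : HasSVEP T) (hU : IsOpen U) (hf : IsLocalResolvent T x f U)
    (hg : IsLocalResolvent T x g U) : EqOn f g U := fun μ hμ => by
  have := hasSVEP_iff.1 h U hU _ (by simpa only [sub_self] using hf.sub hg) hμ
  rwa [Pi.sub_apply, Pi.zero_apply, sub_eq_zero] at this

theorem HasSVEP.exists_isLocalResolvent (h : HasSVEP T) {V : Set ℂ} (hV : IsOpen V)
    (hx : V ⊆ (localSpectrum T x)ᶜ) : ∃ f, IsLocalResolvent T x f V := by
  choose! U hU hlamU g hg using fun lam (hlam : lam ∈ V) =>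
    exists_isLocalResolvent_of_notMem_localSpectrum (hx hlam)
  have hloc : ∀ lam ∈ V, (fun μ => g μ μ) =ᶠ[𝓝 lam] g lam := by
    intro lam hlam
    filter_upwards [((hU lam hlam).inter hV).mem_nhds ⟨hlamU lam hlam, hlam⟩] with μ hμ
    exact h.eqOn ((hU μ hμ.2).inter (hU lam hlam)) ((hg μ hμ.2).mono inter_subset_left)
      ((hg lam hlam).mono inter_subset_right) ⟨hlamU μ hμ.2, hμ.1⟩
  refine ⟨fun μ => g μ μ, fun lam hlam => ?_, fun μ hμ => (hg μ hμ).apply_sub_smul μ (hlamU μ hμ)⟩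
  exact (((hg lam hlam).differentiableOn.differentiableAt ((hU lam hlam).mem_nhds
    (hlamU lam hlam))).congr_of_eventuallyEq (hloc lam hlam)).differentiableWithinAt

/-- By Liouville, a local resolvent function defined on all of `ℂ` is constant, being bounded. -/
theorem HasSVEP.eq_zero_of_localSpectrum_eq_empty (h : HasSVEP T) (hx : localSpectrum T x = ∅) :
    x = 0 := by
  obtain ⟨f, hf⟩ := h.exists_isLocalResolvent (x := x) isOpen_univ (by simp [hx])
  have hd : Differentiable ℂ f := differentiableOn_univ.1 hf.differentiableOn
  have hbdd : Bornology.IsBounded (range f) := by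
    obtain ⟨C, hC⟩ := (isCompact_closedBall (0 : ℂ) (‖T‖ + 1)).exists_bound_of_continuousOn
      hd.continuous.continuousOn
    refine isBounded_iff_forall_norm_le.2 ⟨max C ‖x‖, forall_mem_range.2 fun lam => ?_⟩
    rcases le_or_gt ‖lam‖ (‖T‖ + 1) with hle | hlt
    · exact (hC lam (mem_closedBall_zero_iff.2 hle)).trans (le_max_left _ _)
    · exact (norm_le_of_apply_sub_smul_eq (hf.apply_sub_smul lam trivial) hlt.le).trans
        (le_max_right _ _)
  obtain ⟨c, hc⟩ := hd.exists_const_forall_eq_of_bounded hbdd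
  have h0 := hf.apply_sub_smul 0 trivial
  have h1 := hf.apply_sub_smul 1 trivial
  rw [hc, zero_smul, sub_zero] at h0
  rw [hc, one_smul, h0, sub_eq_self] at h1
  rw [← h0, h1, map_zero]

end LocalSpectrum

section LocalSpectralSubspace

variable {E : Type*} [NormedAddCommGroup E] [NormedSpace ℂ E] [CompleteSpace E] {T : E →L[ℂ] E}

def localSpectralSubmodule (T : E →L[ℂ] E) (G : Set ℂ) : Submodule ℂ E where
  carrier := localSubspace T G
  zero_mem' := by
    change localSpectrum T 0 ⊆ G
    rw [localSpectrum_zero]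
    exact empty_subset G
  add_mem' hx hy := (localSpectrum_add_subset _ _).trans (union_subset hx hy)
  smul_mem' c _ hx := (localSpectrum_smul_subset c _).trans hx

def localSpectralRestrict (T : E →L[ℂ] E) (G : Set ℂ) :
    localSpectralSubmodule T G →L[ℂ] localSpectralSubmodule T G :=
  (T ∘L (localSpectralSubmodule T G).subtypeL).codRestrict _ fun v =>
    (localSpectrum_apply_subset (v : E)).trans v.2

@[simp]
theorem coe_localSpectralRestrict_apply {G : Set ℂ} (v : localSpectralSubmodule T G) :
    (localSpectralRestrict T G v : E) = T v :=
  rfl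

theorem HasSVEP.spectrum_localSpectralRestrict_subset (h : HasSVEP T) {G : Set ℂ}
    (hG : IsClosed (localSubspace T G)) : spectrum ℂ (localSpectralRestrict T G) ⊆ G := by
  have : CompleteSpace (localSpectralSubmodule T G) := hG.completeSpace_coe
  intro ν hνspec
  by_contra hνG
  set L := algebraMap ℂ _ ν - localSpectralRestrict T G
  have hL : ∀ v, (L v : E) = ν • (v : E) - T v := fun v => by
    simp [L, Algebra.algebraMap_eq_smul_one]
  have hker : L.ker = ⊥ := by
    refine LinearMap.ker_eq_bot'.2 fun v hv => Subtype.ext (h.eq_zero_of_localSpectrum_eq_empty ?_)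
    have hv' : L v = 0 := hv
    have hTv : T v = ν • (v : E) := (sub_eq_zero.1 (by rw [← hL, hv']; rfl)).symm
    exact eq_empty_of_forall_notMem fun μ hμ =>
      hνG (localSpectrum_subset_of_apply_eq_smul hTv hμ ▸ v.2 hμ)
  have hrange : L.range = ⊤ := by
    refine LinearMap.range_eq_top.2 fun w => ?_
    obtain ⟨U, hU, hνU, f, hf⟩ :=
      exists_isLocalResolvent_of_notMem_localSpectrum fun hw => hνG (w.2 hw)
    refine ⟨-⟨f ν, fun μ hμ => w.2 (hf.localSpectrum_apply_subset hU hνU hμ)⟩, Subtype.ext ?_⟩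
    change (L _ : E) = w
    rw [hL, Submodule.coe_neg, smul_neg, map_neg, neg_sub_neg]
    exact hf.apply_sub_smul ν hνU
  exact hνspec ⟨(ContinuousLinearEquiv.ofBijective L hker hrange).toUnit, rfl⟩

/-- For `μ ∉ G`, `T - μ` is invertible on the Banach space `X_T(G)`, with inverse continuous
in `μ`. -/
theorem HasSVEP.exists_norm_le_mul_norm_apply_sub_smul (h : HasSVEP T) {G K : Set ℂ}
    (hG : IsClosed (localSubspace T G)) (hK : IsCompact K) (hKG : Disjoint K G) :
    ∃ C, ∀ μ ∈ K, ∀ w ∈ localSubspace T G, ‖w‖ ≤ C * ‖T w - μ • w‖ := by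
  have : CompleteSpace (localSpectralSubmodule T G) := hG.completeSpace_coe
  have hKres : K ⊆ resolventSet ℂ (localSpectralRestrict T G) := fun μ hμ =>
    spectrum.notMem_iff.1 fun hspec =>
      hKG.notMem_of_mem_left hμ (h.spectrum_localSpectralRestrict_subset hG hspec)
  obtain ⟨C, hC⟩ := exists_norm_resolvent_le (A := localSpectralSubmodule T G →L[ℂ] localSpectralSubmodule T G) hK hKres
  refine ⟨C, fun μ hμ w hw => ?_⟩
  have hnorm : ‖localSpectralRestrict T G ⟨w, hw⟩ - μ • ⟨w, hw⟩‖ = ‖T w - μ • w‖ := rfl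
  calc ‖w‖ = ‖(⟨w, hw⟩ : localSpectralSubmodule T G)‖ := rfl
    _ ≤ ‖resolvent (localSpectralRestrict T G) μ‖ * ‖T w - μ • w‖ :=
        hnorm ▸ norm_le_norm_resolvent_mul (hKres hμ) _
    _ ≤ C * ‖T w - μ • w‖ := mul_le_mul_of_nonneg_right (hC μ hμ) (norm_nonneg _)

theorem notMem_localSpectrum_of_uniformCauchySeqOn {x : E} {xs : ℕ → E} {g : ℕ → ℂ → E}
    {lam : ℂ} {r : ℝ} (hr : 0 < r) (hg : ∀ n, IsLocalResolvent T (xs n) (g n) (Metric.ball lam r))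
    (hx : Tendsto xs atTop (𝓝 x)) (hc : UniformCauchySeqOn g atTop (Metric.ball lam r)) :
    lam ∉ localSpectrum T x := by
  choose! gl hgl using fun μ (hμ : μ ∈ Metric.ball lam r) =>
    cauchySeq_tendsto_of_complete (hc.cauchySeq hμ)
  have hd : DifferentiableOn ℂ gl (Metric.ball lam r) :=
    (hc.tendstoUniformlyOn_of_tendsto hgl).tendstoLocallyUniformlyOn.differentiableOn
      (Eventually.of_forall fun n => (hg n).differentiableOn) Metric.isOpen_ball
  refine IsLocalResolvent.notMem_localSpectrum ⟨hd, fun μ hμ => ?_⟩ Metric.isOpen_ball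
    (Metric.mem_ball_self hr)
  exact tendsto_nhds_unique (((T.continuous.tendsto _).comp (hgl μ hμ)).sub
    ((hgl μ hμ).const_smul μ)) (hx.congr fun n => ((hg n).apply_sub_smul μ hμ).symm)

theorem HasSVEP.isClosed_localSubspace_of_isClosed_union_singleton (h : HasSVEP T) {F : Set ℂ}
    (hF : IsClosed F) {lam : ℂ} (hlam : lam ∉ F)
    (hG : IsClosed (localSubspace T (F ∪ {lam}))) : IsClosed (localSubspace T F) := by
  refine isSeqClosed_iff_isClosed.1 fun xs x hxs hx => ?_
  have hxsG : ∀ n, xs n ∈ localSubspace T (F ∪ {lam}) := fun n => (hxs n).trans subset_union_left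
  obtain ⟨d, hd, hdF⟩ := Metric.isOpen_iff.1 hF.isOpen_compl lam hlam
  have hr : 0 < d / 2 := half_pos hd
  have hrd : Metric.closedBall lam (d / 2) ⊆ Metric.ball lam d :=
    Metric.closedBall_subset_ball (half_lt_self hd)
  obtain ⟨C, hC⟩ := h.exists_norm_le_mul_norm_apply_sub_smul hG (isCompact_sphere lam (d / 2))
    (disjoint_left.2 fun μ hμ hμG => hμG.elim (hdF (hrd (Metric.sphere_subset_closedBall hμ)))
      (Metric.ne_of_mem_sphere hμ hr.ne'))
  choose g hg using fun n =>
    h.exists_isLocalResolvent Metric.isOpen_ball fun ν hν hνx => hdF hν (hxs n hνx)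
  have hsphere : ∀ n m, ∀ μ ∈ Metric.sphere lam (d / 2),
      ‖g n μ - g m μ‖ ≤ C * ‖xs n - xs m‖ := by
    intro n m μ hμ
    have hμd := hrd (Metric.sphere_subset_closedBall hμ)
    have hmem : ∀ k, g k μ ∈ localSpectralSubmodule T (F ∪ {lam}) := fun k =>
      ((hg k).localSpectrum_apply_subset Metric.isOpen_ball hμd).trans (hxsG k)
    have := hC μ hμ _ ((localSpectralSubmodule T _).sub_mem (hmem n) (hmem m))
    rwa [map_sub, smul_sub, sub_sub_sub_comm, (hg n).apply_sub_smul μ hμd,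
      (hg m).apply_sub_smul μ hμd] at this
  have hcauchy : UniformCauchySeqOn g atTop (Metric.ball lam (d / 2)) :=
    uniformCauchySeqOn_of_norm_sub_le hx.cauchySeq fun n m μ hμ =>
      norm_le_of_forall_mem_sphere_norm_le hr (((hg n).sub (hg m)).differentiableOn.mono hrd)
        (hsphere n m) (Metric.ball_subset_closedBall hμ)
  have hlamx : lam ∉ localSpectrum T x := notMem_localSpectrum_of_uniformCauchySeqOn hr
    (fun n => (hg n).mono (Metric.ball_subset_ball (half_lt_self hd).le)) hx hcauchy
  exact fun ν hν => ((hG.isSeqClosed hxsG hx) hν).resolve_right fun hνl => hlamx (hνl ▸ hν)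

end LocalSpectralSubspace

section Transfer

variable {X Y : Type*} [NormedAddCommGroup X] [NormedSpace ℂ X] [NormedAddCommGroup Y]
  [NormedSpace ℂ Y] {A : X →L[ℂ] Y} {B C : Y →L[ℂ] X}

/-- By `h3`, `AC` annihilates the correction term `(AB - AC) A v`; this is what turns
`(BA - μ) v = x` into `(AC - μ) w = A x`. -/
noncomputable def transferToAC (A : X →L[ℂ] Y) (B C : Y →L[ℂ] X) (μ : ℂ) (v : X) : Y :=
  A v - μ⁻¹ • (A ∘L B - A ∘L C) (A v)

theorem ac_apply_transferToAC_sub_smul (h3 : A ∘L C ∘L A ∘L B ∘L A = A ∘L C ∘L A ∘L C ∘L A)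
    {μ : ℂ} (hμ : μ ≠ 0) (v : X) :
    (A ∘L C) (transferToAC A B C μ v) - μ • transferToAC A B C μ v = A ((B ∘L A) v - μ • v) := by
  have hq : (A ∘L C) ((A ∘L B - A ∘L C) (A v)) = 0 := by
    have hk := DFunLike.congr_fun h3 v
    simp only [comp_apply] at hk
    simp only [sub_apply, comp_apply, map_sub, hk, sub_self]
  rw [transferToAC, map_sub, map_smul, hq, smul_zero, sub_zero, smul_sub, smul_smul,
    mul_inv_cancel₀ hμ, one_smul]
  simp only [sub_apply, comp_apply, map_sub, map_smul]
  abel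

theorem IsLocalResolvent.transferToAC (h3 : A ∘L C ∘L A ∘L B ∘L A = A ∘L C ∘L A ∘L C ∘L A)
    {x : X} {f : ℂ → X} {U : Set ℂ} (hf : IsLocalResolvent (B ∘L A) x f U) :
    IsLocalResolvent (A ∘L C) (A x) (fun μ => transferToAC A B C μ (f μ)) (U \ {0}) := by
  have hAf : DifferentiableOn ℂ (fun μ => A (f μ)) (U \ {0}) :=
    A.differentiable.comp_differentiableOn (hf.differentiableOn.mono sdiff_subset)
  refine ⟨hAf.sub ((differentiableOn_inv.mono fun μ hμ => hμ.2).smul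
    ((A ∘L B - A ∘L C).differentiable.comp_differentiableOn hAf)), fun μ hμ => ?_⟩
  rw [ac_apply_transferToAC_sub_smul h3 hμ.2, hf.apply_sub_smul μ hμ.1]

theorem eq_zero_of_transferToAC_eq_zero (h1 : A ∘L B ∘L A ∘L B ∘L A = A ∘L B ∘L A ∘L C ∘L A)
    {μ : ℂ} (hμ : μ ≠ 0) {v : X} (hv : (B ∘L A) v = μ • v) (h : transferToAC A B C μ v = 0) :
    v = 0 := by
  have hAv : A v = μ⁻¹ • (A (B (A v)) - A (C (A v))) := by
    simpa only [transferToAC, sub_apply, comp_apply, sub_eq_zero] using h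
  have hABAv : A (B (A v)) = 0 := by
    have hk := DFunLike.congr_fun h1 v
    simp only [comp_apply] at hk
    conv_lhs => rw [hAv]
    rw [map_smul, map_smul, map_sub, map_sub, hk, sub_self, smul_zero]
  have hsq : (B ∘L A) ((B ∘L A) v) = 0 := by simp only [comp_apply, hABAv, map_zero]
  rw [hv, map_smul, hv] at hsq
  simpa [hμ] using hsq

theorem ba_apply_sub_smul_of_ac (h1 : A ∘L B ∘L A ∘L B ∘L A = A ∘L B ∘L A ∘L C ∘L A)
    {μ : ℂ} (hμ : μ ≠ 0) {x : X} {w : Y} (hw : (A ∘L C) w - μ • w = A x) :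
    (B ∘L A) (B (A (B w))) - μ • B (A (B w)) = (B ∘L A) ((B ∘L A) x) := by
  simp only [comp_apply] at hw ⊢
  have hμw : μ • w = A (C w) - A x := by rw [← hw]; abel
  have hw' : A (μ⁻¹ • (C w - x)) = w := by
    rw [map_smul, map_sub, ← hμw, smul_smul, inv_mul_cancel₀ hμ, one_smul]
  have hk := DFunLike.congr_fun h1 (μ⁻¹ • (C w - x))
  simp only [comp_apply, hw'] at hk
  rw [← map_smul, ← map_smul, ← map_smul, hμw, map_sub, map_sub, map_sub, hk]
  abel

theorem IsLocalResolvent.ba_of_ac (h1 : A ∘L B ∘L A ∘L B ∘L A = A ∘L B ∘L A ∘L C ∘L A)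
    {x : X} {g : ℂ → Y} {U : Set ℂ} (hg : IsLocalResolvent (A ∘L C) (A x) g U) :
    IsLocalResolvent (B ∘L A) ((B ∘L A) ((B ∘L A) x)) (fun μ => B (A (B (g μ)))) (U \ {0}) :=
  ⟨(B ∘L A ∘L B).differentiable.comp_differentiableOn (hg.differentiableOn.mono sdiff_subset),
    fun μ hμ => ba_apply_sub_smul_of_ac h1 hμ.2 (hg.apply_sub_smul μ hμ.1)⟩

theorem HasSVEP.ba_of_ac [CompleteSpace X] [CompleteSpace Y]
    (h1 : A ∘L B ∘L A ∘L B ∘L A = A ∘L B ∘L A ∘L C ∘L A)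
    (h3 : A ∘L C ∘L A ∘L B ∘L A = A ∘L C ∘L A ∘L C ∘L A) (hs : HasSVEP (A ∘L C)) :
    HasSVEP (B ∘L A) := by
  refine hasSVEP_iff.2 fun U hU f hf => eqOn_of_eqOn_diff_singleton (lam := 0) hU
    hf.differentiableOn.continuousOn continuousOn_const fun μ hμ => ?_
  have hg := hasSVEP_iff.1 hs _ (hU.sdiff isClosed_singleton) _
    (by simpa only [map_zero] using hf.transferToAC h3)
  exact eq_zero_of_transferToAC_eq_zero h1 hμ.2 (sub_eq_zero.1 (hf.apply_sub_smul μ hμ.1)) (hg hμ)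

theorem localSpectrum_ac_apply_subset [CompleteSpace Y]
    (h3 : A ∘L C ∘L A ∘L B ∘L A = A ∘L C ∘L A ∘L C ∘L A) (x : X) :
    localSpectrum (A ∘L C) (A x) ⊆ localSpectrum (B ∘L A) x ∪ {0} := by
  intro ν hν
  by_contra hc
  obtain ⟨hνx, hν0⟩ := not_or.1 hc
  obtain ⟨U, hU, hνU, f, hf⟩ := exists_isLocalResolvent_of_notMem_localSpectrum hνx
  exact (hf.transferToAC h3).notMem_localSpectrum (hU.sdiff isClosed_singleton) ⟨hνU, hν0⟩ hν

theorem localSpectrum_ba_subset [CompleteSpace X]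
    (h1 : A ∘L B ∘L A ∘L B ∘L A = A ∘L B ∘L A ∘L C ∘L A) (x : X) :
    localSpectrum (B ∘L A) x ⊆ localSpectrum (A ∘L C) (A x) ∪ {0} := by
  intro ν hν
  by_contra hc
  obtain ⟨hνx, hν0⟩ := not_or.1 hc
  obtain ⟨U, hU, hνU, g, hg⟩ := exists_isLocalResolvent_of_notMem_localSpectrum hνx
  exact notMem_localSpectrum_of_notMem_apply hν0 (notMem_localSpectrum_of_notMem_apply hν0
    ((hg.ba_of_ac h1).notMem_localSpectrum (hU.sdiff isClosed_singleton) ⟨hνU, hν0⟩)) hν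

theorem localSubspace_ba_eq_preimage [CompleteSpace X] [CompleteSpace Y]
    (h1 : A ∘L B ∘L A ∘L B ∘L A = A ∘L B ∘L A ∘L C ∘L A)
    (h3 : A ∘L C ∘L A ∘L B ∘L A = A ∘L C ∘L A ∘L C ∘L A) {G : Set ℂ} (hG : 0 ∈ G) :
    localSubspace (B ∘L A) G = A ⁻¹' localSubspace (A ∘L C) G := by
  ext x
  exact ⟨fun hx => (localSpectrum_ac_apply_subset h3 x).trans
      (union_subset hx (singleton_subset_iff.2 hG)),
    fun hx => (localSpectrum_ba_subset h1 x).trans (union_subset hx (singleton_subset_iff.2 hG))⟩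

end Transfer

theorem stmt_9_general {X Y : Type*} [NormedAddCommGroup X] [NormedSpace ℂ X] [CompleteSpace X]
    [NormedAddCommGroup Y] [NormedSpace ℂ Y] [CompleteSpace Y]
    (A : X →L[ℂ] Y) (B C : Y →L[ℂ] X)
    (h1 : A ∘L B ∘L A ∘L B ∘L A = A ∘L B ∘L A ∘L C ∘L A)
    (h3 : A ∘L C ∘L A ∘L B ∘L A = A ∘L C ∘L A ∘L C ∘L A)
    (hsvep : HasSVEP (A ∘L C))
    (F : Set ℂ) (hF : IsClosed F) (h0 : (0 : ℂ) ∉ F)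
    (hclosed : IsClosed (localSubspace (A ∘L C) (F ∪ {0}))) :
    IsClosed (localSubspace (B ∘L A) F) := by
  refine (hsvep.ba_of_ac h1 h3).isClosed_localSubspace_of_isClosed_union_singleton hF h0 ?_
  rw [localSubspace_ba_eq_preimage h1 h3 (mem_union_right F (mem_singleton 0))]
  exact hclosed.preimage A.continuous

theorem stmt_9 {X Y : Type*} [NormedAddCommGroup X] [NormedSpace ℂ X] [CompleteSpace X]
    [NormedAddCommGroup Y] [NormedSpace ℂ Y] [CompleteSpace Y]
    (A : X →L[ℂ] Y) (B C : Y →L[ℂ] X)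
    (h1 : A ∘L B ∘L A ∘L B ∘L A = A ∘L B ∘L A ∘L C ∘L A)
    (h2 : A ∘L B ∘L A ∘L C ∘L A = A ∘L C ∘L A ∘L B ∘L A)
    (h3 : A ∘L C ∘L A ∘L B ∘L A = A ∘L C ∘L A ∘L C ∘L A)
    (hsvep : HasSVEP (A ∘L C))
    (F : Set ℂ) (hF : IsClosed F) (h0 : (0 : ℂ) ∉ F)
    (hclosed : IsClosed (localSubspace (A ∘L C) (F ∪ {0}))) :
    IsClosed (localSubspace (B ∘L A) F) :=
  stmt_9_general A B C h1 h3 hsvep F hF h0 hclosed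
end

section
/- Let X and Y be complex Banach spaces, A : X → Y and B, C : Y → X bounded linear operators satisfying A(BA)² = ABACA = ACABA = (AC)²A. Then for every nonzero λ ∈ ℂ, the analytic core K(AC − λ) is closed in Y if and only if the analytic core K(BA − λ) is closed in X. -/
/-!
With `M = BACAC` and `N = ACA` the hypotheses give `BA ∘ M = M ∘ AC`, `AC ∘ N = N ∘ BA`,
`N ∘ M = (AC)⁴` and `M ∘ N = (BA)⁴`. An intertwining operator maps analytic cores into analytic
cores. Conversely, `(AC)⁴ = λ⁴ + (AC - λ) Q` with `Q` commuting with `AC - λ`, and since `λ⁴ ≠ 0`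
a backward orbit of `NMy` under `AC - λ` can be corrected into one of `y`. Hence
`K(AC - λ) = M⁻¹ K(BA - λ)` and `K(BA - λ) = N⁻¹ K(AC - λ)`, and preimages of closed sets under
bounded operators are closed.
-/

open ContinuousLinearMap Filter Topology Set

/-- The analytic core `K(T)` : all `x` for which there are `c > 0` and a sequence
`(xₙ)` with `x₀ = x`, `T xₙ₊₁ = xₙ` and `‖xₙ‖ ≤ cⁿ ‖x‖` for all `n`. -/
def analyticCore {E : Type*} [NormedAddCommGroup E] [NormedSpace ℂ E]
    (T : E →L[ℂ] E) : Set E :=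
  {x | ∃ c > (0 : ℝ), ∃ u : ℕ → E, u 0 = x ∧ (∀ n : ℕ, T (u (n + 1)) = u n) ∧
    ∀ n : ℕ, ‖u n‖ ≤ c ^ n * ‖x‖}

open Polynomial in
lemma exists_commute_aeval_eq_smul_one_add_mul {K A : Type*} [CommRing K] [Ring A] [Algebra K A]
    (a : A) (p : K[X]) (μ : K) :
    ∃ q : A, Commute (a - μ • 1) q ∧ aeval a p = p.eval μ • 1 + (a - μ • 1) * q := by
  set q := (p - C (p.eval μ)) /ₘ (X - C μ)
  have hroot : (X - C μ) * q = p - C (p.eval μ) := mul_divByMonic_eq_iff_isRoot.mpr (by simp)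
  have hX : aeval a (X - C μ) = a - μ • 1 := by
    rw [map_sub, aeval_X, aeval_C, Algebra.algebraMap_eq_smul_one]
  refine ⟨aeval a q, hX ▸ (Commute.all _ _).map (aeval a), ?_⟩
  rw [← hX, ← map_mul, hroot, map_sub, aeval_C, Algebra.algebraMap_eq_smul_one]
  abel

section AnalyticCore

variable {E F : Type*} [NormedAddCommGroup E] [NormedSpace ℂ E]
  [NormedAddCommGroup F] [NormedSpace ℂ F]

lemma zero_mem_analyticCore (T : E →L[ℂ] E) : (0 : E) ∈ analyticCore T :=
  ⟨1, one_pos, fun _ => 0, rfl, fun _ => map_zero T, fun n => by simp⟩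

lemma mem_analyticCore_of_norm_le_mul_pow {T : E →L[ℂ] E} {u : ℕ → E}
    (hu : ∀ n, T (u (n + 1)) = u n) {C c : ℝ} (hc : 0 ≤ c) (hC : ∀ n, ‖u n‖ ≤ C * c ^ n) :
    u 0 ∈ analyticCore T := by
  rcases eq_or_ne (u 0) 0 with h0 | h0
  · rw [h0]; exact zero_mem_analyticCore T
  have hx : 0 < ‖u 0‖ := norm_pos_iff.mpr h0
  set D := max 1 (C / ‖u 0‖)
  refine ⟨D * max 1 c, by positivity, u, rfl, hu, ?_⟩
  rintro (_ | n)
  · simp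
  calc ‖u (n + 1)‖ ≤ C / ‖u 0‖ * c ^ (n + 1) * ‖u 0‖ := by
        rw [div_mul_eq_mul_div, div_mul_cancel₀ _ hx.ne']; exact hC _
    _ ≤ D ^ (n + 1) * max 1 c ^ (n + 1) * ‖u 0‖ := by
        gcongr
        · exact (le_max_right _ _).trans (le_self_pow₀ (le_max_left _ _) n.succ_ne_zero)
        · exact le_max_right _ _
    _ = (D * max 1 c) ^ (n + 1) * ‖u 0‖ := by rw [mul_pow]

lemma map_mem_analyticCore {S : E →L[ℂ] E} {T : F →L[ℂ] F} {M : F →L[ℂ] E}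
    (hM : S ∘L M = M ∘L T) {y : F} (hy : y ∈ analyticCore T) : M y ∈ analyticCore S := by
  obtain ⟨c, hc, u, rfl, hu, hbound⟩ := hy
  refine mem_analyticCore_of_norm_le_mul_pow (u := fun n => M (u n))
    (fun n => by simpa [hu] using congr($hM (u (n + 1)))) hc.le (C := ‖M‖ * ‖u 0‖) fun n => ?_
  calc ‖M (u n)‖ ≤ ‖M‖ * (c ^ n * ‖u 0‖) := M.le_of_opNorm_le_of_le le_rfl (hbound n)
    _ = ‖M‖ * ‖u 0‖ * c ^ n := by ring

lemma mem_analyticCore_of_smul_add_mem {T Q : E →L[ℂ] E} (hTQ : Commute T Q) {μ : ℂ}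
    (hμ : μ ≠ 0) {x : E} (hx : μ • x + T (Q x) ∈ analyticCore T) : x ∈ analyticCore T := by
  obtain ⟨c, hc, w, hw0, hw, hbound⟩ := hx
  rw [← hw0] at hbound
  let v : ℕ → E := fun n => Nat.rec x (fun k vk => μ⁻¹ • (w (k + 1) - Q vk)) n
  have hv : ∀ n, v (n + 1) = μ⁻¹ • (w (n + 1) - Q (v n)) := fun _ => rfl
  have hTQ' : ∀ z, T (Q z) = Q (T z) := fun z => congr($hTQ.eq z)
  have hTv : ∀ n, T (v (n + 1)) = v n := by
    intro n
    induction n with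
    | zero => simp [v, hw, hw0, smul_smul, hμ]
    | succ n ih => rw [hv, map_smul, map_sub, hw, hTQ', ih, ← hv]
  set a := ‖μ‖⁻¹
  set d := c + a * ‖Q‖
  set D := max ‖x‖ (a * ‖w 0‖)
  have hbound_v : ∀ n, ‖v n‖ ≤ D * d ^ n := by
    intro n
    induction n with
    | zero => rw [pow_zero, mul_one]; exact le_max_left _ _
    | succ n ih =>
      have hcd : c ^ n ≤ d ^ n := pow_le_pow_left₀ hc.le (le_add_of_nonneg_right (by positivity)) n
      calc ‖v (n + 1)‖ ≤ a * (‖w (n + 1)‖ + ‖Q‖ * ‖v n‖) := by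
            rw [hv, norm_smul, norm_inv]
            gcongr
            exact (norm_sub_le _ _).trans (by gcongr; exact Q.le_opNorm _)
        _ ≤ a * (c ^ (n + 1) * ‖w 0‖ + ‖Q‖ * (D * d ^ n)) := by gcongr; exact hbound _
        _ = a * ‖w 0‖ * c ^ n * c + a * ‖Q‖ * (D * d ^ n) := by ring
        _ ≤ D * d ^ n * c + a * ‖Q‖ * (D * d ^ n) := by
            gcongr
            exact le_max_right _ _
        _ = D * d ^ (n + 1) := by ring
  exact mem_analyticCore_of_norm_le_mul_pow hTv (by positivity) hbound_v

lemma sub_smul_one_comp_of_comp_eq {R : F →L[ℂ] F} {R' : E →L[ℂ] E} {M : F →L[ℂ] E}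
    (hM : R' ∘L M = M ∘L R) (μ : ℂ) : (R' - μ • 1) ∘L M = M ∘L (R - μ • 1) := by
  simp [sub_comp, comp_sub, hM, one_def]

theorem analyticCore_sub_smul_one_eq_preimage {R : F →L[ℂ] F} {R' : E →L[ℂ] E}
    {M : F →L[ℂ] E} {N : E →L[ℂ] F} (hM : R' ∘L M = M ∘L R) (hN : R ∘L N = N ∘L R')
    {p : Polynomial ℂ} (hNM : N ∘L M = Polynomial.aeval R p) {μ : ℂ} (hp : p.eval μ ≠ 0) :
    analyticCore (R - μ • 1) = M ⁻¹' analyticCore (R' - μ • 1) := by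
  ext y
  refine ⟨map_mem_analyticCore (sub_smul_one_comp_of_comp_eq hM μ), fun hy => ?_⟩
  obtain ⟨Q, hQ, hpQ⟩ := exists_commute_aeval_eq_smul_one_add_mul R p μ
  have hNMy := map_mem_analyticCore (sub_smul_one_comp_of_comp_eq hN μ) hy
  rw [← comp_apply, hNM, hpQ] at hNMy
  exact mem_analyticCore_of_smul_add_mem hQ hp hNMy

end AnalyticCore

theorem stmt_11_general {X Y : Type*} [NormedAddCommGroup X] [NormedSpace ℂ X]
    [NormedAddCommGroup Y] [NormedSpace ℂ Y]
    (A : X →L[ℂ] Y) (B C : Y →L[ℂ] X)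
    (h1 : A ∘L B ∘L A ∘L B ∘L A = A ∘L B ∘L A ∘L C ∘L A)
    (h2 : A ∘L B ∘L A ∘L C ∘L A = A ∘L C ∘L A ∘L B ∘L A)
    (h3 : A ∘L C ∘L A ∘L B ∘L A = A ∘L C ∘L A ∘L C ∘L A)
    (lam : ℂ) (hlam : lam ≠ 0) :
    IsClosed (analyticCore (A ∘L C - lam • 1)) ↔
      IsClosed (analyticCore (B ∘L A - lam • 1)) := by
  simp only [ContinuousLinearMap.ext_iff, comp_apply] at h1 h2 h3
  set M := B ∘L A ∘L C ∘L A ∘L C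
  set N := A ∘L C ∘L A
  have hM : (B ∘L A) ∘L M = M ∘L (A ∘L C) := by
    ext y; simp [M, h2, h3]
  have hN : (A ∘L C) ∘L N = N ∘L (B ∘L A) := by
    ext x; simp [N, h3]
  have hNM : N ∘L M = (A ∘L C) ^ 4 := by
    ext y; simp [M, N, pow_succ, h3]
  have hMN : M ∘L N = (B ∘L A) ^ 4 := by
    ext x; simp [M, N, pow_succ, h1, h2, h3]
  have hp : (Polynomial.X ^ 4 : Polynomial ℂ).eval lam ≠ 0 := by simpa using hlam
  have hKY := analyticCore_sub_smul_one_eq_preimage hM hN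
    (hNM.trans (Polynomial.aeval_X_pow _).symm) hp
  have hKX := analyticCore_sub_smul_one_eq_preimage hN hM
    (hMN.trans (Polynomial.aeval_X_pow _).symm) hp
  exact ⟨fun h => hKX ▸ h.preimage N.continuous, fun h => hKY ▸ h.preimage M.continuous⟩

theorem stmt_11 {X Y : Type*} [NormedAddCommGroup X] [NormedSpace ℂ X] [CompleteSpace X]
    [NormedAddCommGroup Y] [NormedSpace ℂ Y] [CompleteSpace Y]
    (A : X →L[ℂ] Y) (B C : Y →L[ℂ] X)
    (h1 : A ∘L B ∘L A ∘L B ∘L A = A ∘L B ∘L A ∘L C ∘L A)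
    (h2 : A ∘L B ∘L A ∘L C ∘L A = A ∘L C ∘L A ∘L B ∘L A)
    (h3 : A ∘L C ∘L A ∘L B ∘L A = A ∘L C ∘L A ∘L C ∘L A)
    (lam : ℂ) (hlam : lam ≠ 0) :
    IsClosed (analyticCore (A ∘L C - lam • 1)) ↔
      IsClosed (analyticCore (B ∘L A - lam • 1)) :=
  stmt_11_general A B C h1 h2 h3 lam hlam
end

section
/- Let X and Y be complex Banach spaces, A : X → Y and B, C : Y → X bounded linear operators satisfying A(BA)² = ABACA = ACABA = (AC)²A. Then the quasinilpotent part H₀(AC) is closed in Y if and only if the quasinilpotent part H₀(BA) is closed in X. -/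
open ContinuousLinearMap Filter Topology Set

/-- The quasinilpotent part `H₀(T) = {x : ‖Tⁿ x‖^(1/n) → 0}`. -/
def quasinilpotentPart {E : Type*} [NormedAddCommGroup E] [NormedSpace ℂ E]
    (T : E →L[ℂ] E) : Set E :=
  {x | Tendsto (fun n : ℕ => ‖(T ^ n) x‖ ^ (1 / (n : ℝ))) atTop (nhds 0)}

lemma qnp_iff {E : Type*} [NormedAddCommGroup E] [NormedSpace ℂ E]
    (T : E →L[ℂ] E) (x : E) :
    x ∈ quasinilpotentPart T ↔ ∀ ε > (0:ℝ), ∀ᶠ n : ℕ in atTop, ‖(T ^ n) x‖ ≤ ε ^ n := by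
  constructor
  · intro h ε hε
    have h' : ∀ᶠ n : ℕ in atTop, ‖(T ^ n) x‖ ^ (1 / (n : ℝ)) < ε :=
      h.eventually (eventually_lt_nhds hε)
    filter_upwards [h', eventually_ge_atTop 1] with n hn hn1
    have hnn : (0:ℝ) ≤ ‖(T ^ n) x‖ := norm_nonneg _
    have key : (‖(T ^ n) x‖ ^ (1 / (n : ℝ))) ^ n = ‖(T ^ n) x‖ := by
      rw [one_div]
      exact Real.rpow_inv_natCast_pow hnn (by omega)
    calc ‖(T ^ n) x‖ = (‖(T ^ n) x‖ ^ (1 / (n : ℝ))) ^ n := key.symm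
      _ ≤ ε ^ n := by
          apply pow_le_pow_left₀ (Real.rpow_nonneg hnn _) hn.le
  · intro h
    rw [quasinilpotentPart, mem_setOf_eq, Metric.tendsto_atTop]
    intro ε hε
    have hε2 : (0:ℝ) < ε / 2 := by linarith
    obtain ⟨N, hN⟩ := eventually_atTop.1 (h (ε/2) hε2)
    refine ⟨max N 1, fun n hn => ?_⟩
    have hn1 : 1 ≤ n := le_trans (le_max_right N 1) hn
    have hnN : N ≤ n := le_trans (le_max_left N 1) hn
    have hb : ‖(T ^ n) x‖ ≤ (ε/2) ^ n := hN n hnN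
    have hnn : (0:ℝ) ≤ ‖(T ^ n) x‖ := norm_nonneg _
    have h1 : ‖(T ^ n) x‖ ^ (1 / (n : ℝ)) ≤ ε / 2 := by
      have := Real.rpow_le_rpow hnn hb (by positivity : (0:ℝ) ≤ 1 / (n:ℝ))
      rw [one_div, Real.pow_rpow_inv_natCast hε2.le (by omega)] at this
      rwa [one_div]
    have h0 : (0:ℝ) ≤ ‖(T ^ n) x‖ ^ (1 / (n : ℝ)) := Real.rpow_nonneg hnn _
    rw [Real.dist_eq, sub_zero, abs_of_nonneg h0]
    linarith

lemma qnp_transfer {E F : Type*} [NormedAddCommGroup E] [NormedSpace ℂ E]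
    [NormedAddCommGroup F] [NormedSpace ℂ F]
    (T : E →L[ℂ] E) (S : F →L[ℂ] F) (x : E) (y : F) (k : ℕ) (K : ℝ) (hK : 0 ≤ K)
    (h : ∀ n : ℕ, ‖(S ^ (n + k)) y‖ ≤ K * ‖(T ^ n) x‖)
    (hx : x ∈ quasinilpotentPart T) : y ∈ quasinilpotentPart S := by
  rw [qnp_iff] at hx ⊢
  intro ε hε
  have hε2 : (0:ℝ) < ε / 2 := by linarith
  have h1 := hx (ε/2) hε2
  have h2 : Tendsto (fun n : ℕ => K * (1/2 : ℝ) ^ n) atTop (nhds 0) := by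
    simpa using (tendsto_pow_atTop_nhds_zero_of_lt_one (by norm_num : (0:ℝ) ≤ 1/2)
      (by norm_num : (1/2:ℝ) < 1)).const_mul K
  have h3 : ∀ᶠ n : ℕ in atTop, K * (1/2:ℝ) ^ n ≤ ε ^ k := by
    have : (0:ℝ) < ε ^ k := by positivity
    simpa using h2.eventually (eventually_le_nhds this)
  have key : ∀ᶠ n : ℕ in atTop, ‖(S ^ (n + k)) y‖ ≤ ε ^ (n + k) := by
    filter_upwards [h1, h3] with n hn hn3
    have c1 : ‖(S ^ (n + k)) y‖ ≤ K * (ε/2) ^ n :=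
      le_trans (h n) (mul_le_mul_of_nonneg_left hn hK)
    have c2 : (ε/2 : ℝ) ^ n = (1/2:ℝ)^n * ε ^ n := by
      rw [← mul_pow]; ring_nf
    have hεn : (0:ℝ) ≤ ε ^ n := by positivity
    calc ‖(S ^ (n + k)) y‖ ≤ K * ((1/2:ℝ)^n * ε ^ n) := by rw [← c2]; exact c1
      _ = (K * (1/2:ℝ)^n) * ε ^ n := by ring
      _ ≤ ε ^ k * ε ^ n := mul_le_mul_of_nonneg_right hn3 hεn
      _ = ε ^ (n + k) := by rw [← pow_add]; ring_nf
  obtain ⟨N, hN⟩ := eventually_atTop.1 key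
  refine eventually_atTop.2 ⟨N + k, fun m hm => ?_⟩
  have hmk : m - k + k = m := Nat.sub_add_cancel (by omega)
  have := hN (m - k) (by omega)
  rwa [hmk] at this

section aux

variable {X Y : Type*} [NormedAddCommGroup X] [NormedSpace ℂ X]
    [NormedAddCommGroup Y] [NormedSpace ℂ Y]
    (A : X →L[ℂ] Y) (B C : Y →L[ℂ] X)

/-- `Sᵏ(Ax) = A(Rᵏx)` where `S = AC`, `R = CA`. -/
lemma lem_SA (k : ℕ) (x : X) :
    ((A ∘L C) ^ k) (A x) = A (((C ∘L A) ^ k) x) := by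
  induction k with
  | zero => simp
  | succ k ih =>
    rw [pow_succ', pow_succ', ContinuousLinearMap.mul_apply,
      ContinuousLinearMap.mul_apply, ih]
    rfl

/-- From h3: `S(A(Tu)) = S(S(Au))`, i.e. `S^{n+1}(Ax) = S(A(Tⁿx))`. -/
lemma lem_I (e3 : ∀ u : X, A (C (A (B (A u)))) = A (C (A (C (A u)))))
    (n : ℕ) (x : X) :
    ((A ∘L C) ^ (n+1)) (A x) = (A ∘L C) (A (((B ∘L A) ^ n) x)) := by
  induction n with
  | zero => simp
  | succ n ih =>
    have hp : ((A ∘L C) ^ (n+2)) (A x) = (A ∘L C) (((A ∘L C) ^ (n+1)) (A x)) := by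
      rw [pow_succ']; rfl
    have hT : ((B ∘L A) ^ (n+1)) x = B (A (((B ∘L A) ^ n) x)) := by
      rw [pow_succ']; rfl
    rw [hp, ih, hT]
    exact (e3 (((B ∘L A) ^ n) x)).symm

/-- `T^{n+1} x = B(Qⁿ(Ax))` where `T = BA`, `Q = AB`. -/
lemma lem_TB (n : ℕ) : ∀ x : X,
    ((B ∘L A) ^ (n+1)) x = B (((A ∘L B) ^ n) (A x)) := by
  induction n with
  | zero => intro x; simp
  | succ n ih =>
    intro x
    have hp : ((B ∘L A) ^ (n+2)) x = ((B ∘L A) ^ (n+1)) ((B ∘L A) x) := by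
      rw [pow_succ]; rfl
    rw [hp, ih ((B ∘L A) x)]
    have : A ((B ∘L A) x) = (A ∘L B) (A x) := rfl
    rw [this, ← ContinuousLinearMap.mul_apply, ← pow_succ]

/-- `Tⁿ(Bw) = B(Qⁿw)`. -/
lemma lem_TBw (n : ℕ) : ∀ w : Y,
    ((B ∘L A) ^ n) (B w) = B (((A ∘L B) ^ n) w) := by
  induction n with
  | zero => intro w; simp
  | succ n ih =>
    intro w
    have hp : ((B ∘L A) ^ (n+1)) (B w) = ((B ∘L A) ^ n) ((B ∘L A) (B w)) := by
      rw [pow_succ]; rfl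
    have h0 : (B ∘L A) (B w) = B ((A ∘L B) w) := rfl
    rw [hp, h0, ih ((A ∘L B) w), ← ContinuousLinearMap.mul_apply, ← pow_succ]

/-- From `ABACA = ACACA`: `Q(S^{j+1}(Ax)) = S^{j+2}(Ax)`. -/
lemma lem_QSA (e4 : ∀ u : X, A (B (A (C (A u)))) = A (C (A (C (A u)))))
    (j : ℕ) (x : X) :
    (A ∘L B) (((A ∘L C) ^ (j+1)) (A x)) = ((A ∘L C) ^ (j+2)) (A x) := by
  have h1 : ((A ∘L C) ^ (j+1)) (A x) = A (C (A (((C ∘L A) ^ j) x))) := by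
    rw [lem_SA, pow_succ']; rfl
  have h2 : ((A ∘L C) ^ (j+2)) (A x)
      = (A ∘L C) ((A ∘L C) (((A ∘L C) ^ j) (A x))) := by
    rw [pow_succ', pow_succ']; rfl
  rw [h1, h2, lem_SA]
  exact e4 (((C ∘L A) ^ j) x)

/-- `Q(S^{j+2}y) = S^{j+3}y` for all `y`. -/
lemma lem_QS (e4 : ∀ u : X, A (B (A (C (A u)))) = A (C (A (C (A u)))))
    (j : ℕ) (y : Y) :
    (A ∘L B) (((A ∘L C) ^ (j+2)) y) = ((A ∘L C) ^ (j+3)) y := by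
  have h1 : ((A ∘L C) ^ (j+2)) y
      = A (C (A (C (((A ∘L C) ^ j) y)))) := by
    rw [pow_succ', pow_succ']; rfl
  have h2 : ((A ∘L C) ^ (j+3)) y
      = (A ∘L C) ((A ∘L C) ((A ∘L C) (((A ∘L C) ^ j) y))) := by
    rw [pow_succ', pow_succ', pow_succ']; rfl
  rw [h1, h2]
  exact e4 (C (((A ∘L C) ^ j) y))

/-- `Q^{k+2}(Ax) = S^{k+2}(Ax)`. -/
lemma lem_QA (e4 : ∀ u : X, A (B (A (C (A u)))) = A (C (A (C (A u)))))
    (e124 : ∀ u : X, A (B (A (B (A u)))) = A (C (A (C (A u)))))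
    (k : ℕ) (x : X) :
    ((A ∘L B) ^ (k+2)) (A x) = ((A ∘L C) ^ (k+2)) (A x) := by
  induction k with
  | zero =>
    have hq : ((A ∘L B) ^ 2) (A x) = A (B (A (B (A x)))) := by
      rw [pow_two]; rfl
    have hs : ((A ∘L C) ^ 2) (A x) = A (C (A (C (A x)))) := by
      rw [pow_two]; rfl
    rw [hq, hs]; exact e124 x
  | succ k ih =>
    have hp : ((A ∘L B) ^ (k+3)) (A x) = (A ∘L B) (((A ∘L B) ^ (k+2)) (A x)) := by
      rw [pow_succ']; rfl
    rw [hp, ih]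
    exact lem_QSA A B C e4 (k+1) x

/-- `Qⁿ(S²y) = S^{n+2}y`. -/
lemma lem_QnS (e4 : ∀ u : X, A (B (A (C (A u)))) = A (C (A (C (A u)))))
    (n : ℕ) (y : Y) :
    ((A ∘L B) ^ n) (((A ∘L C) ^ 2) y) = ((A ∘L C) ^ (n+2)) y := by
  induction n with
  | zero => simp
  | succ n ih =>
    have hp : ((A ∘L B) ^ (n+1)) (((A ∘L C) ^ 2) y)
        = (A ∘L B) (((A ∘L B) ^ n) (((A ∘L C) ^ 2) y)) := by
      rw [pow_succ']; rfl
    rw [hp, ih]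
    exact lem_QS A B C e4 n y

end aux

theorem stmt_12 {X Y : Type*} [NormedAddCommGroup X] [NormedSpace ℂ X] [CompleteSpace X]
    [NormedAddCommGroup Y] [NormedSpace ℂ Y] [CompleteSpace Y]
    (A : X →L[ℂ] Y) (B C : Y →L[ℂ] X)
    (h1 : A ∘L B ∘L A ∘L B ∘L A = A ∘L B ∘L A ∘L C ∘L A)
    (h2 : A ∘L B ∘L A ∘L C ∘L A = A ∘L C ∘L A ∘L B ∘L A)
    (h3 : A ∘L C ∘L A ∘L B ∘L A = A ∘L C ∘L A ∘L C ∘L A) :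
    IsClosed (quasinilpotentPart (A ∘L C)) ↔ IsClosed (quasinilpotentPart (B ∘L A)) := by
  -- pointwise versions of the hypotheses
  have p1 : ∀ u : X, A (B (A (B (A u)))) = A (B (A (C (A u)))) := fun u => by
    have := DFunLike.congr_fun h1 u; simpa using this
  have p2 : ∀ u : X, A (B (A (C (A u)))) = A (C (A (B (A u)))) := fun u => by
    have := DFunLike.congr_fun h2 u; simpa using this
  have p3 : ∀ u : X, A (C (A (B (A u)))) = A (C (A (C (A u)))) := fun u => by
    have := DFunLike.congr_fun h3 u; simpa using this
  have e4 : ∀ u : X, A (B (A (C (A u)))) = A (C (A (C (A u)))) := fun u =>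
    (p2 u).trans (p3 u)
  have e124 : ∀ u : X, A (B (A (B (A u)))) = A (C (A (C (A u)))) := fun u =>
    (p1 u).trans (e4 u)
  -- membership transfers
  -- m1 : x ∈ H₀(T) → A x ∈ H₀(S)
  have m1 : ∀ x : X, x ∈ quasinilpotentPart (B ∘L A) →
      A x ∈ quasinilpotentPart (A ∘L C) := by
    intro x hx
    refine qnp_transfer (B ∘L A) (A ∘L C) x (A x) 1 ‖(A ∘L C) ∘L A‖ (norm_nonneg _) ?_ hx
    intro n
    rw [lem_I A B C p3 n x]
    exact ((A ∘L C) ∘L A).le_opNorm (((B ∘L A) ^ n) x)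
  -- m2 : A x ∈ H₀(S) → x ∈ H₀(T)
  have m2 : ∀ x : X, A x ∈ quasinilpotentPart (A ∘L C) →
      x ∈ quasinilpotentPart (B ∘L A) := by
    intro x hx
    refine qnp_transfer (A ∘L C) (B ∘L A) (A x) x 5 ‖B ∘L ((A ∘L C) ^ 4)‖
      (norm_nonneg _) ?_ hx
    intro n
    have key : ((B ∘L A) ^ (n+5)) x = B (((A ∘L C) ^ (n+4)) (A x)) := by
      rw [lem_TB A B (n+4) x]
      congr 1
      exact lem_QA A B C e4 e124 (n+2) x
    have hsplit : ((A ∘L C) ^ (n+4)) (A x)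
        = ((A ∘L C) ^ 4) (((A ∘L C) ^ n) (A x)) := by
      rw [show n + 4 = 4 + n by ring, pow_add, ContinuousLinearMap.mul_apply]
    rw [key, hsplit]
    exact (B ∘L ((A ∘L C) ^ 4)).le_opNorm (((A ∘L C) ^ n) (A x))
  -- m3 : y ∈ H₀(S) → B(S²y) ∈ H₀(T)
  have m3 : ∀ y : Y, y ∈ quasinilpotentPart (A ∘L C) →
      B (((A ∘L C) ^ 2) y) ∈ quasinilpotentPart (B ∘L A) := by
    intro y hy
    refine qnp_transfer (A ∘L C) (B ∘L A) y (B (((A ∘L C) ^ 2) y)) 0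
      ‖B ∘L ((A ∘L C) ^ 2)‖ (norm_nonneg _) ?_ hy
    intro n
    have key : ((B ∘L A) ^ n) (B (((A ∘L C) ^ 2) y))
        = B (((A ∘L C) ^ (n+2)) y) := by
      rw [lem_TBw A B n, lem_QnS A B C e4 n y]
    have hsplit : ((A ∘L C) ^ (n+2)) y
        = ((A ∘L C) ^ 2) (((A ∘L C) ^ n) y) := by
      rw [show n + 2 = 2 + n by ring, pow_add, ContinuousLinearMap.mul_apply]
    simp only [Nat.add_zero]
    rw [key, hsplit]
    exact (B ∘L ((A ∘L C) ^ 2)).le_opNorm (((A ∘L C) ^ n) y)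
  -- m4 : B(S²y) ∈ H₀(T) → y ∈ H₀(S)
  have m4 : ∀ y : Y, B (((A ∘L C) ^ 2) y) ∈ quasinilpotentPart (B ∘L A) →
      y ∈ quasinilpotentPart (A ∘L C) := by
    intro y hy
    refine qnp_transfer (B ∘L A) (A ∘L C) (B (((A ∘L C) ^ 2) y)) y 3 ‖A‖
      (norm_nonneg _) ?_ hy
    intro n
    have key : ((A ∘L C) ^ (n+3)) y
        = A (((B ∘L A) ^ n) (B (((A ∘L C) ^ 2) y))) := by
      rw [lem_TBw A B n, lem_QnS A B C e4 n y]
      exact (lem_QS A B C e4 n y).symm.trans rfl |>.symm ▸ rfl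
    rw [key]
    exact A.le_opNorm _
  constructor
  · intro hS
    have hset : quasinilpotentPart (B ∘L A) = A ⁻¹' quasinilpotentPart (A ∘L C) := by
      ext x
      exact ⟨m1 x, m2 x⟩
    rw [hset]
    exact hS.preimage A.continuous
  · intro hT
    have hset : quasinilpotentPart (A ∘L C)
        = (B ∘L ((A ∘L C) ^ 2)) ⁻¹' quasinilpotentPart (B ∘L A) := by
      ext y
      exact ⟨m3 y, m4 y⟩
    rw [hset]
    exact hT.preimage (B ∘L ((A ∘L C) ^ 2)).continuous
end

section
/- Let X and Y be complex Banach spaces, A : X → Y and B, C : Y → X bounded linear operators satisfying A(BA)² = ABACA = ACABA = (AC)²A, and assume that ABA and ACA have dense ranges. If BA has the weak spectral property (δ_w), then AC has the weak spectral property (δ_w). -/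
open ContinuousLinearMap Filter Topology Set

/-- `T` has the weak spectral property (δ_w) : for every finite open cover
`U₁, …, Uₙ` of `ℂ`, the subspace `𝒳_T(closure U₁) + ⋯ + 𝒳_T(closure Uₙ)` is
dense in `E`. -/
def HasDeltaW {E : Type*} [NormedAddCommGroup E] [NormedSpace ℂ E]
    (T : E →L[ℂ] E) : Prop :=
  ∀ (n : ℕ) (U : Fin n → Set ℂ), (∀ i, IsOpen (U i)) → (⋃ i, U i) = univ →
    Dense {x : E | ∃ g : Fin n → E,
      (∀ i, g i ∈ glocalSubspace T (closure (U i))) ∧ x = ∑ i, g i}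

theorem stmt_13 {X Y : Type*} [NormedAddCommGroup X] [NormedSpace ℂ X] [CompleteSpace X]
    [NormedAddCommGroup Y] [NormedSpace ℂ Y] [CompleteSpace Y]
    (A : X →L[ℂ] Y) (B C : Y →L[ℂ] X)
    (h1 : A ∘L B ∘L A ∘L B ∘L A = A ∘L B ∘L A ∘L C ∘L A)
    (h2 : A ∘L B ∘L A ∘L C ∘L A = A ∘L C ∘L A ∘L B ∘L A)
    (h3 : A ∘L C ∘L A ∘L B ∘L A = A ∘L C ∘L A ∘L C ∘L A)
    (hABA : DenseRange (A ∘L B ∘L A)) (hACA : DenseRange (A ∘L C ∘L A))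
    (hBA : HasDeltaW (B ∘L A)) :
    HasDeltaW (A ∘L C) := by
  intro n U hU hUuniv
  -- key: ABA maps glocalSubspace (B∘A) F into glocalSubspace (A∘C) F
  have key : ∀ (F : Set ℂ) (x : X), x ∈ glocalSubspace (B ∘L A) F →
      (A ∘L B ∘L A) x ∈ glocalSubspace (A ∘L C) F := by
    rintro F x ⟨f, hf, hfx⟩
    refine ⟨(A ∘L B ∘L A) ∘ f, (A ∘L B ∘L A).comp_analyticOnNhd hf, fun mu hmu => ?_⟩
    have hcomm : (A ∘L C ∘L A ∘L B ∘L A) (f mu) = (A ∘L B ∘L A ∘L B ∘L A) (f mu) := by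
      rw [h1.trans h2]
    have hx := hfx mu hmu
    simp only [Function.comp_apply, comp_apply] at hcomm ⊢
    calc A (C (A (B (A (f mu))))) - mu • A (B (A (f mu)))
        = A (B (A (B (A (f mu))))) - mu • A (B (A (f mu))) := by rw [hcomm]
      _ = (A ∘L B ∘L A) ((B ∘L A) (f mu) - mu • f mu) := by
          simp [comp_apply, map_sub, map_smul]
      _ = (A ∘L B ∘L A) x := by rw [hx]
      _ = A (B (A x)) := rfl
  have hdense := hBA n U hU hUuniv
  have himg := hABA.dense_image (A ∘L B ∘L A).continuous hdense
  refine himg.mono ?_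
  rintro _ ⟨x, ⟨g, hg, rfl⟩, rfl⟩
  refine ⟨fun i => (A ∘L B ∘L A) (g i), fun i => key _ _ (hg i), ?_⟩
  simp [map_sum]
end

section
/- Let X and Y be complex Banach spaces, A : X → Y and B, C : Y → X bounded linear operators satisfying A(BA)² = ABACA = ACABA = (AC)²A. Then AC − I is surjective if and only if BA − I is surjective. -/
open ContinuousLinearMap Filter Topology Set

theorem stmt_14 {X Y : Type*} [NormedAddCommGroup X] [NormedSpace ℂ X] [CompleteSpace X]
    [NormedAddCommGroup Y] [NormedSpace ℂ Y] [CompleteSpace Y]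
    (A : X →L[ℂ] Y) (B C : Y →L[ℂ] X)
    (h1 : A ∘L B ∘L A ∘L B ∘L A = A ∘L B ∘L A ∘L C ∘L A)
    (h2 : A ∘L B ∘L A ∘L C ∘L A = A ∘L C ∘L A ∘L B ∘L A)
    (h3 : A ∘L C ∘L A ∘L B ∘L A = A ∘L C ∘L A ∘L C ∘L A) :
    Function.Surjective ⇑(A ∘L C - 1 : Y →L[ℂ] Y) ↔
      Function.Surjective ⇑(B ∘L A - 1 : X →L[ℂ] X) := by
  have H1 : ∀ v, A (B (A (B (A v)))) = A (B (A (C (A v)))) := fun v => by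
    have := ContinuousLinearMap.ext_iff.mp h1 v
    simpa using this
  have H3 : ∀ v, A (C (A (C (A v)))) = A (C (A (B (A v)))) := fun v => by
    have := (ContinuousLinearMap.ext_iff.mp h3 v).symm
    simpa using this
  constructor
  · intro hs x
    obtain ⟨y, hy⟩ := hs (A x)
    have hy' : A (C y) = y + A x := by
      have : A (C y) - y = A x := by simpa using hy
      linear_combination (norm := abel) this
    refine ⟨-x + B y + B (A (B y)) - B (A (C y)), ?_⟩
    have hb : B y = B (A (C y)) - B (A x) := by rw [hy']; simp
    have K : A (B (A (B y))) = A (B y) + A (B (A x)) := by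
      calc A (B (A (B y))) = A (B (A (B (A (C y))))) - A (B (A (B (A x)))) := by
            rw [hb]; simp
        _ = A (B (A (C (A (C y))))) - A (B (A (C (A x)))) := by rw [H1, H1]
        _ = A (B y) + A (B (A x)) := by simp [hy']
    simp only [ContinuousLinearMap.sub_apply, ContinuousLinearMap.comp_apply,
      ContinuousLinearMap.one_apply, map_add, map_sub, map_neg, K, hy']
    abel
  · intro hs y
    obtain ⟨x, hx⟩ := hs (C y)
    have hx' : B (A x) = x + C y := by
      have : B (A x) - x = C y := by simpa using hx
      linear_combination (norm := abel) this
    refine ⟨-y + A x + A (C (A x)) - A (B (A x)), ?_⟩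
    simp only [ContinuousLinearMap.sub_apply, ContinuousLinearMap.comp_apply,
      ContinuousLinearMap.one_apply, map_add, map_sub, map_neg, H3, hx']
    abel
end

section
/- Let X and Y be complex Banach spaces, A : X → Y and B, C : Y → X bounded linear operators satisfying A(BA)² = ABACA = ACABA = (AC)²A. Then AC − I is bounded below if and only if BA − I is bounded below. -/
open ContinuousLinearMap Filter Topology Set

/-- `T` is bounded below : there is `c > 0` with `c ‖x‖ ≤ ‖T x‖` for all `x`. -/
def BoundedBelow {E : Type*} [NormedAddCommGroup E] [NormedSpace ℂ E]
    (T : E →L[ℂ] E) : Prop :=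
  ∃ c > (0 : ℝ), ∀ x : E, c * ‖x‖ ≤ ‖T x‖

lemma bb_of_bound {E : Type*} [NormedAddCommGroup E] [NormedSpace ℂ E]
    (T : E →L[ℂ] E) (K : ℝ) (hK : 0 < K) (h : ∀ x, ‖x‖ ≤ K * ‖T x‖) :
    BoundedBelow T := by
  refine ⟨K⁻¹, by positivity, fun x => ?_⟩
  rw [inv_mul_le_iff₀ hK]
  exact h x

theorem stmt_15 {X Y : Type*} [NormedAddCommGroup X] [NormedSpace ℂ X] [CompleteSpace X]
    [NormedAddCommGroup Y] [NormedSpace ℂ Y] [CompleteSpace Y]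
    (A : X →L[ℂ] Y) (B C : Y →L[ℂ] X)
    (h1 : A ∘L B ∘L A ∘L B ∘L A = A ∘L B ∘L A ∘L C ∘L A)
    (h2 : A ∘L B ∘L A ∘L C ∘L A = A ∘L C ∘L A ∘L B ∘L A)
    (h3 : A ∘L C ∘L A ∘L B ∘L A = A ∘L C ∘L A ∘L C ∘L A) :
    BoundedBelow (A ∘L C - 1) ↔ BoundedBelow (B ∘L A - 1) := by
  have h12 : ∀ x : X, A (B (A (B (A x)))) = A (C (A (B (A x)))) := by
    intro x
    have := DFunLike.congr_fun (h1.trans h2) x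
    simpa using this
  have h23 : ∀ x : X, A (B (A (C (A x)))) = A (C (A (C (A x)))) := by
    intro x
    have := DFunLike.congr_fun (h2.trans h3) x
    simpa using this
  constructor
  · rintro ⟨c, hc, hbb⟩
    set a := ‖A‖ with ha
    set b := ‖B‖ with hb
    have ha0 : 0 ≤ a := norm_nonneg _
    have hb0 : 0 ≤ b := norm_nonneg _
    refine bb_of_bound _ (b * (a * b * a / c) + 1 + b * a) (by positivity) (fun x => ?_)
    set m := (B ∘L A - 1) x with hm
    have hmx : B (A x) = x + m := by simp [hm]
    -- key identity: (AC-1)(A(B(A x))) = A(B(A m))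
    have key : (A ∘L C - 1) (A (B (A x))) = A (B (A m)) := by
      have : A (B (A m)) = A (B (A (B (A x)))) - A (B (A x)) := by
        simp [hm, map_sub]
      have expand : (A ∘L C - 1) (A (B (A x))) = A (C (A (B (A x)))) - A (B (A x)) := by
        simp
      rw [expand, this, h12 x]
    have e1 : c * ‖A (B (A x))‖ ≤ ‖A (B (A m))‖ := by
      rw [← key]; exact hbb _
    have e2 : ‖A (B (A m))‖ ≤ a * b * a * ‖m‖ := by
      calc ‖A (B (A m))‖ ≤ a * ‖B (A m)‖ := A.le_opNorm _
        _ ≤ a * (b * ‖A m‖) := by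
            exact mul_le_mul_of_nonneg_left (B.le_opNorm _) ha0
        _ ≤ a * (b * (a * ‖m‖)) := by
            have := A.le_opNorm m
            exact mul_le_mul_of_nonneg_left (mul_le_mul_of_nonneg_left this hb0) ha0
        _ = a * b * a * ‖m‖ := by ring
    have e3 : ‖A (B (A x))‖ ≤ a * b * a / c * ‖m‖ := by
      rw [div_mul_eq_mul_div, le_div_iff₀ hc]
      calc ‖A (B (A x))‖ * c = c * ‖A (B (A x))‖ := by ring
        _ ≤ ‖A (B (A m))‖ := e1
        _ ≤ a * b * a * ‖m‖ := e2
    -- reconstruction: x = B(A(B(A x))) - m - B(A m)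
    have hrec : x = B (A (B (A x))) - m - B (A m) := by
      rw [hmx, map_add, map_add, hmx]
      abel
    calc ‖x‖ = ‖B (A (B (A x))) - m - B (A m)‖ := by rw [← hrec]
      _ ≤ ‖B (A (B (A x))) - m‖ + ‖B (A m)‖ := norm_sub_le _ _
      _ ≤ ‖B (A (B (A x)))‖ + ‖m‖ + ‖B (A m)‖ := by
          have := norm_sub_le (B (A (B (A x)))) m
          linarith
      _ ≤ b * (a * b * a / c * ‖m‖) + ‖m‖ + b * (a * ‖m‖) := by
          have t1 : ‖B (A (B (A x)))‖ ≤ b * (a * b * a / c * ‖m‖) := by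
            calc ‖B (A (B (A x)))‖ ≤ b * ‖A (B (A x))‖ := B.le_opNorm _
              _ ≤ b * (a * b * a / c * ‖m‖) := mul_le_mul_of_nonneg_left e3 hb0
          have t2 : ‖B (A m)‖ ≤ b * (a * ‖m‖) := by
            calc ‖B (A m)‖ ≤ b * ‖A m‖ := B.le_opNorm _
              _ ≤ b * (a * ‖m‖) := mul_le_mul_of_nonneg_left (A.le_opNorm _) hb0
          linarith
      _ = (b * (a * b * a / c) + 1 + b * a) * ‖m‖ := by ring
  · rintro ⟨c, hc, hbb⟩
    set a := ‖A‖ with ha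
    set b := ‖B‖ with hb
    set d := ‖C‖ with hd
    have ha0 : 0 ≤ a := norm_nonneg _
    have hb0 : 0 ≤ b := norm_nonneg _
    have hd0 : 0 ≤ d := norm_nonneg _
    refine bb_of_bound _
      (a * (b * ((a*d)*((a*d)*(a*d))) / c) + 1 + a*d + (a*d)*(a*d) + (a*d)*((a*d)*(a*d)))
      (by positivity) (fun y => ?_)
    set n := (A ∘L C - 1) y with hn
    have hny : A (C y) = y + n := by simp [hn]
    set p1 := A (C y) with hp1
    set p2 := A (C p1) with hp2
    set p3 := A (C p2) with hp3
    set r1 := A (C n) with hr1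
    set r2 := A (C r1) with hr2
    set r3 := A (C r2) with hr3
    -- A (B p3) = A (C p3)
    have hABp3 : A (B p3) = A (C p3) := by
      rw [hp3, hp2]
      exact h23 (C p1)
    -- telescoping: n = p1 - y, r1 = p2 - p1, r2 = p3 - p2, r3 = A(C p3) - p3
    have hn' : n = p1 - y := by rw [hny]; abel
    have hr1' : r1 = p2 - p1 := by rw [hr1, hn', map_sub, map_sub, ← hp1, ← hp2]
    have hr2' : r2 = p3 - p2 := by rw [hr2, hr1', map_sub, map_sub, ← hp2, ← hp3]
    have hr3' : r3 = A (C p3) - p3 := by rw [hr3, hr2', map_sub, map_sub, ← hp3]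
    -- key: (BA - 1)(B p3) = B r3
    have key : (B ∘L A - 1) (B p3) = B r3 := by
      have : (B ∘L A - 1) (B p3) = B (A (B p3)) - B p3 := by simp
      rw [this, hABp3, hr3', map_sub]
    have e1 : c * ‖B p3‖ ≤ ‖B r3‖ := by rw [← key]; exact hbb _
    have hr1n : ‖r1‖ ≤ a * d * ‖n‖ := by
      calc ‖r1‖ ≤ a * ‖C n‖ := A.le_opNorm _
        _ ≤ a * (d * ‖n‖) := mul_le_mul_of_nonneg_left (C.le_opNorm _) ha0
        _ = a * d * ‖n‖ := by ring
    have hr2n : ‖r2‖ ≤ (a*d) * ((a*d) * ‖n‖) := by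
      calc ‖r2‖ ≤ a * ‖C r1‖ := A.le_opNorm _
        _ ≤ a * (d * ‖r1‖) := mul_le_mul_of_nonneg_left (C.le_opNorm _) ha0
        _ ≤ a * (d * (a * d * ‖n‖)) := by
            exact mul_le_mul_of_nonneg_left (mul_le_mul_of_nonneg_left hr1n hd0) ha0
        _ = (a*d) * ((a*d) * ‖n‖) := by ring
    have hr3n : ‖r3‖ ≤ (a*d) * ((a*d) * ((a*d) * ‖n‖)) := by
      calc ‖r3‖ ≤ a * ‖C r2‖ := A.le_opNorm _
        _ ≤ a * (d * ‖r2‖) := mul_le_mul_of_nonneg_left (C.le_opNorm _) ha0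
        _ ≤ a * (d * ((a*d) * ((a*d) * ‖n‖))) := by
            exact mul_le_mul_of_nonneg_left (mul_le_mul_of_nonneg_left hr2n hd0) ha0
        _ = (a*d) * ((a*d) * ((a*d) * ‖n‖)) := by ring
    have e2 : ‖B p3‖ ≤ b * ((a*d)*((a*d)*(a*d))) / c * ‖n‖ := by
      rw [div_mul_eq_mul_div, le_div_iff₀ hc]
      calc ‖B p3‖ * c = c * ‖B p3‖ := by ring
        _ ≤ ‖B r3‖ := e1
        _ ≤ b * ‖r3‖ := B.le_opNorm _
        _ ≤ b * ((a*d) * ((a*d) * ((a*d) * ‖n‖))) := mul_le_mul_of_nonneg_left hr3n hb0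
        _ = b * ((a*d)*((a*d)*(a*d))) * ‖n‖ := by ring
    -- reconstruction: y = A (B p3) - n - r1 - r2 - r3
    have hrec : y = A (B p3) - n - r1 - r2 - r3 := by
      rw [hABp3, hr3', hr2', hr1', hn']
      abel
    have hABp3n : ‖A (B p3)‖ ≤ a * (b * ((a*d)*((a*d)*(a*d))) / c * ‖n‖) := by
      calc ‖A (B p3)‖ ≤ a * ‖B p3‖ := A.le_opNorm _
        _ ≤ a * (b * ((a*d)*((a*d)*(a*d))) / c * ‖n‖) := mul_le_mul_of_nonneg_left e2 ha0
    calc ‖y‖ = ‖A (B p3) - n - r1 - r2 - r3‖ := by rw [← hrec]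
      _ ≤ ‖A (B p3)‖ + ‖n‖ + ‖r1‖ + ‖r2‖ + ‖r3‖ := by
          have t1 := norm_sub_le (A (B p3) - n - r1 - r2) r3
          have t2 := norm_sub_le (A (B p3) - n - r1) r2
          have t3 := norm_sub_le (A (B p3) - n) r1
          have t4 := norm_sub_le (A (B p3)) n
          linarith
      _ ≤ (a * (b * ((a*d)*((a*d)*(a*d))) / c) + 1 + a*d + (a*d)*(a*d) + (a*d)*((a*d)*(a*d))) * ‖n‖ := by
          have hn0 : (0:ℝ) ≤ ‖n‖ := norm_nonneg _
          linarith [hABp3n, hr1n, hr2n, hr3n]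
end

section
/- Let X and Y be complex Banach spaces, A : X → Y and B, C : Y → X bounded linear operators satisfying A(BA)² = ABACA = ACABA = (AC)²A. Then AC − I is invertible (bijective) if and only if BA − I is invertible (bijective). Equivalently, σ(AC) ∖ {0} = σ(BA) ∖ {0}. -/
open ContinuousLinearMap Filter Topology Set

section Aux
set_option linter.unusedSectionVars false
set_option linter.unusedVariables false

private lemma isUnit_unit_mul' {M : Type*} [Monoid M] {a : M} (ha : IsUnit a) (b : M) :
    IsUnit (a * b) ↔ IsUnit b := by
  constructor
  · intro h
    have hb : (↑ha.unit⁻¹ : M) * (a * b) = b := by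
      rw [← mul_assoc, IsUnit.val_inv_mul, one_mul]
    rw [← hb]
    exact (ha.unit⁻¹).isUnit.mul h
  · exact ha.mul

private lemma algShift {R : Type*} [Ring R] [Algebra ℂ R] {lam : ℂ} (hlam : lam ≠ 0) (t : R) :
    IsUnit (algebraMap ℂ R lam - t) ↔ IsUnit (1 - lam⁻¹ • t) := by
  have h1 : algebraMap ℂ R lam - t = lam • (1 - lam⁻¹ • t) := by
    rw [smul_sub, smul_smul, mul_inv_cancel₀ hlam, one_smul, Algebra.algebraMap_eq_smul_one]
  rw [h1, Algebra.smul_def]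
  exact isUnit_unit_mul' ((isUnit_iff_ne_zero.mpr hlam).map (algebraMap ℂ R)) _

variable {X Y : Type*} [NormedAddCommGroup X] [NormedSpace ℂ X] [CompleteSpace X]
    [NormedAddCommGroup Y] [NormedSpace ℂ Y] [CompleteSpace Y]

private lemma oneComp {E F : Type*} [NormedAddCommGroup E] [NormedSpace ℂ E]
    [NormedAddCommGroup F] [NormedSpace ℂ F] (f : E →L[ℂ] F) :
    (1 : F →L[ℂ] F) ∘L f = f := by rw [one_def, id_comp]

private lemma compOne {E F : Type*} [NormedAddCommGroup E] [NormedSpace ℂ E]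
    [NormedAddCommGroup F] [NormedSpace ℂ F] (f : E →L[ℂ] F) :
    f ∘L (1 : E →L[ℂ] E) = f := by rw [one_def, comp_id]

/-- Jacobson's lemma for continuous linear operators. -/
private lemma jacAux (A : X →L[ℂ] Y) (B : Y →L[ℂ] X)
    (h : IsUnit (1 - B ∘L A : X →L[ℂ] X)) : IsUnit (1 - A ∘L B : Y →L[ℂ] Y) := by
  obtain ⟨u, hu⟩ := h
  set U : X →L[ℂ] X := ↑u⁻¹ with hUdef
  have hU1 : (1 - B ∘L A) * U = 1 := by rw [← hu]; exact u.mul_inv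
  have hU2 : U * (1 - B ∘L A) = 1 := by rw [← hu]; exact u.inv_mul
  have key1 : (B ∘L A) ∘L U = U - 1 := by
    rw [sub_mul, one_mul, mul_def] at hU1
    rw [← hU1]; abel
  have key2 : U ∘L (B ∘L A) = U - 1 := by
    rw [mul_sub, mul_one, mul_def] at hU2
    rw [← hU2]; abel
  have key1' : B ∘L (A ∘L (U ∘L B)) = U ∘L B - B := by
    have := congrArg (fun t => t ∘L B) key1
    simpa only [comp_assoc, sub_comp, one_def, id_comp] using this
  have key2' : A ∘L (U ∘L (B ∘L (A ∘L B))) = A ∘L (U ∘L B) - A ∘L B := by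
    have := congrArg (fun t => (A ∘L t) ∘L B) key2
    simpa only [comp_assoc, comp_sub, sub_comp, comp_id, one_def, id_comp] using this
  refine ⟨⟨1 - A ∘L B, 1 + A ∘L (U ∘L B), ?_, ?_⟩, rfl⟩
  · rw [sub_mul, one_mul, mul_def, comp_add]
    simp only [one_def, comp_id, comp_assoc]
    rw [key1', comp_sub]
    abel
  · rw [mul_sub, mul_one, mul_def, add_comp]
    simp only [one_def, id_comp, comp_assoc]
    rw [key2']
    abel

/-- The main direction: if `1 - AC` is invertible then so is `1 - BA`. -/
private lemma mainAux (A : X →L[ℂ] Y) (B C : Y →L[ℂ] X)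
    (h1 : A ∘L B ∘L A ∘L B ∘L A = A ∘L B ∘L A ∘L C ∘L A)
    (h3 : A ∘L C ∘L A ∘L B ∘L A = A ∘L C ∘L A ∘L C ∘L A)
    (h : IsUnit (1 - A ∘L C : Y →L[ℂ] Y)) : IsUnit (1 - B ∘L A : X →L[ℂ] X) := by
  obtain ⟨u, hu⟩ := h
  set R : Y →L[ℂ] Y := ↑u⁻¹ with hRdef
  have hR1 : (1 - A ∘L C) * R = 1 := by rw [← hu]; exact u.mul_inv
  have hR2 : R * (1 - A ∘L C) = 1 := by rw [← hu]; exact u.inv_mul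
  have hq1 : (A ∘L C) ∘L R = R - 1 := by
    rw [sub_mul, one_mul, mul_def] at hR1; rw [← hR1]; abel
  have hq2 : R ∘L (A ∘L C) = R - 1 := by
    rw [mul_sub, mul_one, mul_def] at hR2; rw [← hR2]; abel
  set dA : X →L[ℂ] Y := A ∘L (B ∘L A) - A ∘L (C ∘L A) with hdA
  have k1 : A ∘L (B ∘L dA) = 0 := by
    rw [hdA, comp_sub, comp_sub, h1, sub_self]
  have k2 : A ∘L (C ∘L dA) = 0 := by
    rw [hdA, comp_sub, comp_sub, h3, sub_self]
  have k3 : R ∘L dA = dA := by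
    have h' : R = 1 + R ∘L (A ∘L C) := by rw [hq2]; abel
    have : R ∘L dA = dA + R ∘L (A ∘L (C ∘L dA)) := by
      nth_rewrite 1 [h']
      rw [add_comp, oneComp]
      simp only [comp_assoc]
    rw [this, k2, comp_zero, add_zero]
  set S : X →L[ℂ] X := 1 + C ∘L (R ∘L A) with hS
  have k4 : A ∘L S = R ∘L A := by
    have h' : A ∘L (C ∘L (R ∘L A)) = (R - 1) ∘L A := by
      rw [← hq1]; simp only [comp_assoc]
    rw [hS, comp_add, compOne, h', sub_comp, oneComp]
    abel
  have k5a : (1 - C ∘L A) * S = 1 := by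
    rw [sub_mul, one_mul, mul_def, comp_assoc, k4, hS]
    abel
  have t1 : R ∘L (A ∘L (C ∘L A)) = R ∘L A - A := by
    have : R ∘L (A ∘L (C ∘L A)) = (R ∘L (A ∘L C)) ∘L A := by
      simp only [comp_assoc]
    rw [this, hq2, sub_comp, oneComp]
  have k5b : S * (1 - C ∘L A) = 1 := by
    have h' : S ∘L (C ∘L A) = C ∘L (R ∘L A) := by
      rw [hS, add_comp, oneComp]
      simp only [comp_assoc]
      rw [t1, comp_sub]
      abel
    rw [mul_sub, mul_one, mul_def, h', hS]
    abel
  set d' : X →L[ℂ] X := B ∘L A - C ∘L A with hd'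
  set m : X →L[ℂ] X := (B - C) ∘L (R ∘L A) with hm
  have k6 : d' * S = m := by
    rw [mul_def, hd', sub_comp, comp_assoc, comp_assoc, k4, hm, sub_comp]
  have k8 : m * d' = (B - C) ∘L dA := by
    rw [mul_def, hm, hd', comp_assoc, comp_sub]
    congr 1
    have : (R ∘L A) ∘L (B ∘L A) - (R ∘L A) ∘L (C ∘L A) = R ∘L dA := by
      rw [hdA, comp_sub]
      simp only [comp_assoc]
    rw [this, k3, hdA]
  have k10 : m * ((B - C) ∘L dA) = 0 := by
    have hin : A ∘L ((B - C) ∘L dA) = 0 := by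
      rw [sub_comp, comp_sub, k1, k2, sub_self]
    rw [mul_def, hm, comp_assoc, comp_assoc, hin, comp_zero, comp_zero]
  have hp : (1 - B ∘L A : X →L[ℂ] X) = (1 - C ∘L A) - d' := by rw [hd']; abel
  have hm2d : m * m * d' = 0 := by rw [mul_assoc, k8, k10]
  have hm3 : m * m * m = 0 := by
    nth_rewrite 3 [← k6]
    rw [← mul_assoc, hm2d, zero_mul]
  have hstep : (1 - B ∘L A) * S = 1 - m := by
    rw [hp, sub_mul, k5a, k6]
  refine ⟨⟨1 - B ∘L A, S * (1 + m + m * m), ?_, ?_⟩, rfl⟩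
  · rw [← mul_assoc, hstep]
    have : (1 - m) * (1 + m + m * m) = 1 - m * m * m := by noncomm_ring
    rw [this, hm3, sub_zero]
  · have e1 : m * (1 - C ∘L A) = d' := by rw [← k6, mul_assoc, k5b, mul_one]
    have hstep2 : (1 + m + m * m) * (1 - B ∘L A) = 1 - C ∘L A := by
      rw [hp, mul_sub]
      have e2 : (1 + m + m * m) * (1 - C ∘L A) = (1 - C ∘L A) + d' + m * d' := by
        rw [add_mul, add_mul, one_mul, e1, mul_assoc, e1]
      have e3 : (1 + m + m * m) * d' = d' + m * d' + 0 := by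
        rw [add_mul, add_mul, one_mul, hm2d]
      rw [e2, e3]
      abel
    rw [mul_assoc, hstep2]
    exact k5b

private lemma unitIff (A : X →L[ℂ] Y) (B C : Y →L[ℂ] X)
    (h1 : A ∘L B ∘L A ∘L B ∘L A = A ∘L B ∘L A ∘L C ∘L A)
    (h3 : A ∘L C ∘L A ∘L B ∘L A = A ∘L C ∘L A ∘L C ∘L A) :
    IsUnit (1 - A ∘L C : Y →L[ℂ] Y) ↔ IsUnit (1 - B ∘L A : X →L[ℂ] X) := by
  constructor
  · exact mainAux A B C h1 h3
  · intro h
    exact jacAux A C (mainAux A C B h3.symm h1.symm (jacAux A B h))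

end Aux

theorem stmt_16 {X Y : Type*} [NormedAddCommGroup X] [NormedSpace ℂ X] [CompleteSpace X]
    [NormedAddCommGroup Y] [NormedSpace ℂ Y] [CompleteSpace Y]
    (A : X →L[ℂ] Y) (B C : Y →L[ℂ] X)
    (h1 : A ∘L B ∘L A ∘L B ∘L A = A ∘L B ∘L A ∘L C ∘L A)
    (h2 : A ∘L B ∘L A ∘L C ∘L A = A ∘L C ∘L A ∘L B ∘L A)
    (h3 : A ∘L C ∘L A ∘L B ∘L A = A ∘L C ∘L A ∘L C ∘L A) :
    (Function.Bijective ⇑(A ∘L C - 1 : Y →L[ℂ] Y) ↔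
      Function.Bijective ⇑(B ∘L A - 1 : X →L[ℂ] X)) ∧
    spectrum ℂ (A ∘L C) \ {0} = spectrum ℂ (B ∘L A) \ {0} := by
  constructor
  · have e1 : (A ∘L C - 1 : Y →L[ℂ] Y) = -(1 - A ∘L C) := by rw [neg_sub]
    have e2 : (B ∘L A - 1 : X →L[ℂ] X) = -(1 - B ∘L A) := by rw [neg_sub]
    rw [e1, e2, ← isUnit_iff_bijective, ← isUnit_iff_bijective,
      IsUnit.neg_iff, IsUnit.neg_iff]
    exact unitIff A B C h1 h3
  · have hspec : ∀ lam : ℂ, lam ≠ 0 →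
        (IsUnit (algebraMap ℂ (Y →L[ℂ] Y) lam - A ∘L C) ↔
          IsUnit (algebraMap ℂ (X →L[ℂ] X) lam - B ∘L A)) := by
      intro lam hlam
      rw [algShift hlam, algShift hlam]
      have c1 : (lam⁻¹ • (A ∘L C) : Y →L[ℂ] Y) = A ∘L (lam⁻¹ • C) := (comp_smul A lam⁻¹ C).symm
      have c2 : (lam⁻¹ • (B ∘L A) : X →L[ℂ] X) = (lam⁻¹ • B) ∘L A := (smul_comp lam⁻¹ B A).symm
      rw [c1, c2]
      refine unitIff A (lam⁻¹ • B) (lam⁻¹ • C) ?_ ?_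
      · simp only [smul_comp, comp_smul, h1]
      · simp only [smul_comp, comp_smul, h3]
    ext lam
    simp only [mem_diff, mem_singleton_iff, spectrum.mem_iff]
    constructor
    · rintro ⟨hs, hne⟩
      exact ⟨fun hc => hs ((hspec lam hne).mpr hc), hne⟩
    · rintro ⟨hs, hne⟩
      exact ⟨fun hc => hs ((hspec lam hne).mp hc), hne⟩
end

section
/- Let X and Y be complex Banach spaces, A : X → Y and B, C : Y → X bounded linear operators satisfying A(BA)² = ABACA = ACABA = (AC)²A. Then AC − I is injective if and only if BA − I is injective. -/
open ContinuousLinearMap Filter Topology Set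

theorem stmt_17 {X Y : Type*} [NormedAddCommGroup X] [NormedSpace ℂ X] [CompleteSpace X]
    [NormedAddCommGroup Y] [NormedSpace ℂ Y] [CompleteSpace Y]
    (A : X →L[ℂ] Y) (B C : Y →L[ℂ] X)
    (h1 : A ∘L B ∘L A ∘L B ∘L A = A ∘L B ∘L A ∘L C ∘L A)
    (h2 : A ∘L B ∘L A ∘L C ∘L A = A ∘L C ∘L A ∘L B ∘L A)
    (h3 : A ∘L C ∘L A ∘L B ∘L A = A ∘L C ∘L A ∘L C ∘L A) :
    Function.Injective ⇑(A ∘L C - 1 : Y →L[ℂ] Y) ↔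
      Function.Injective ⇑(B ∘L A - 1 : X →L[ℂ] X) := by
  rw [injective_iff_map_eq_zero, injective_iff_map_eq_zero]
  constructor
  · -- AC - I injective → BA - I injective
    intro hinj x hx
    have hxe : B (A x) = x := by
      have : (A ∘L C - 1) = (A ∘L C - 1) := rfl
      simpa [ContinuousLinearMap.sub_apply, ContinuousLinearMap.comp_apply,
        ContinuousLinearMap.one_apply, sub_eq_zero] using hx
    -- v := A (C (A x)) is fixed by A ∘ C
    have e3 := DFunLike.congr_fun h3 x
    simp only [ContinuousLinearMap.comp_apply, hxe] at e3
    -- e3 : A (C (A x)) = A (C (A (C (A x))))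
    have hv : A (C (A (C (A x)))) = 0 := by
      have hmain := hinj (A (C (A (C (A x)))))
      simp only [ContinuousLinearMap.sub_apply, ContinuousLinearMap.comp_apply,
        ContinuousLinearMap.one_apply, sub_eq_zero] at hmain
      apply hmain
      rw [← e3]
      exact e3.symm
    have hv' : A (C (A x)) = 0 := e3.trans hv
    have e1 := DFunLike.congr_fun h1 x
    simp only [ContinuousLinearMap.comp_apply, hxe, hv', map_zero] at e1
    -- e1 : A x = 0
    rw [← hxe, e1, map_zero]
  · -- BA - I injective → AC - I injective
    intro hinj y hy
    have hye : A (C y) = y := by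
      simpa [ContinuousLinearMap.sub_apply, ContinuousLinearMap.comp_apply,
        ContinuousLinearMap.one_apply, sub_eq_zero] using hy
    set z := C y with hz
    have hAz : A z = y := hye
    have hACAz : A (C (A z)) = A z := by rw [hAz, hye]
    have e1 := DFunLike.congr_fun h1 z
    simp only [ContinuousLinearMap.comp_apply, hACAz] at e1
    -- e1 : A (B (A (B (A z)))) = A (B (A z))
    have hfix : (B ∘L A - 1) (B (A (B (A z)))) = 0 := by
      simp only [ContinuousLinearMap.sub_apply, ContinuousLinearMap.comp_apply,
        ContinuousLinearMap.one_apply, sub_eq_zero]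
      rw [e1]
    have h0 : B (A (B (A z))) = 0 := hinj _ hfix
    have hABAz : A (B (A z)) = 0 := by
      have := congrArg A h0
      rw [map_zero] at this
      rw [← e1, this]
    have e3 := DFunLike.congr_fun h3 z
    simp only [ContinuousLinearMap.comp_apply, hABAz, map_zero] at e3
    -- e3 : 0 = A (C (A (C (A z))))
    rw [hAz, hye, hye] at e3
    exact e3.symm
end

section
/- Let X and Y be complex Banach spaces, A : X → Y and B, C : Y → X bounded linear operators satisfying A(BA)² = ABACA = ACABA = (AC)²A. Then (i) AC − I is upper semi-Fredholm if and only if BA − I is upper semi-Fredholm, and (ii) AC − I is lower semi-Fredholm if and only if BA − I is lower semi-Fredholm. -/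
open ContinuousLinearMap Filter Topology Set

/-- `T` is upper semi-Fredholm : closed range and finite-dimensional kernel. -/
def UpperSemiFredholm {E : Type*} [NormedAddCommGroup E] [NormedSpace ℂ E]
    (T : E →L[ℂ] E) : Prop :=
  IsClosed (Set.range T) ∧ FiniteDimensional ℂ (LinearMap.ker (T : E →ₗ[ℂ] E))

/-- `T` is lower semi-Fredholm : its range has finite codimension. -/
def LowerSemiFredholm {E : Type*} [NormedAddCommGroup E] [NormedSpace ℂ E]
    (T : E →L[ℂ] E) : Prop :=
  FiniteDimensional ℂ (E ⧸ LinearMap.range (T : E →ₗ[ℂ] E))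

/-!
Put `U = AB`, `P = AC` and `N = U - P` in the ring `L(Y)`. Precomposing the hypotheses with `B`
or `C` gives `xNy = 0` for `x, y ∈ {U, P}`, hence `N³ = 0` and `(UN)² = 0`, so `1 + N` and
`1 - UN` are invertible, and `(U - 1)(1 + N) = (1 - UN)(P - 1)`. Thus `AB - 1` and `AC - 1` differ
by invertible factors on both sides, which preserves both semi-Fredholm properties. Jacobson's
lemma then passes them from `AB - 1` to `BA - 1`: `A` maps `ker (BA - 1)` isomorphically onto
`ker (AB - 1)`, `range (BA - 1) = A⁻¹ (range (AB - 1))`, and `B` induces a surjection of cokernels.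
-/

theorem exists_units_sub_one_eq_mul_mul {R : Type*} [Ring R] {u p : R}
    (huu : u * (u - p) * u = 0) (hup : u * (u - p) * p = 0)
    (hpu : p * (u - p) * u = 0) (hpp : p * (u - p) * p = 0) :
    ∃ a b : Rˣ, u - 1 = a * (p - 1) * b := by
  set n := u - p with hn
  have hn3 : n ^ 3 = 0 := by
    calc n ^ 3 = (u * n * u - p * n * u) - (u * n * p - p * n * p) := by rw [hn]; noncomm_ring
      _ = 0 := by rw [huu, hup, hpu, hpp]; simp
  have hm2 : (u * n) ^ 2 = 0 := by rw [sq, ← mul_assoc, huu, zero_mul]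
  obtain ⟨a, ha⟩ := IsNilpotent.isUnit_one_sub ⟨2, hm2⟩
  obtain ⟨b, hb⟩ := IsNilpotent.isUnit_one_add ⟨3, hn3⟩
  have key : (u - 1) * (1 + n) = (1 - u * n) * (p - 1) := by
    rw [← sub_eq_zero, ← hup, hn]; noncomm_ring
  refine ⟨a, b⁻¹, ?_⟩
  rw [Units.eq_mul_inv_iff_mul_eq, ha, hb, key]

namespace LinearMap

variable {R M N : Type*} [Ring R] [AddCommGroup M] [Module R M] [AddCommGroup N] [Module R N]
  (f : M →ₗ[R] N) (g : N →ₗ[R] M)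

theorem mem_ker_comp_sub_one {x : M} : x ∈ ker (g ∘ₗ f - 1) ↔ g (f x) = x := by
  simp [sub_eq_zero]

def kerCompSubOneEquiv : ker (g ∘ₗ f - 1) ≃ₗ[R] ker (f ∘ₗ g - 1) where
  toFun x := ⟨f x, (mem_ker_comp_sub_one g f).2 (by rw [(mem_ker_comp_sub_one f g).1 x.2])⟩
  invFun y := ⟨g y, (mem_ker_comp_sub_one f g).2 (by rw [(mem_ker_comp_sub_one g f).1 y.2])⟩
  map_add' x y := by ext; simp
  map_smul' c x := by ext; simp
  left_inv x := Subtype.ext ((mem_ker_comp_sub_one f g).1 x.2)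
  right_inv y := Subtype.ext ((mem_ker_comp_sub_one g f).1 y.2)

theorem range_comp_sub_one_eq_comap : range (g ∘ₗ f - 1) = (range (f ∘ₗ g - 1)).comap f := by
  ext x
  constructor
  · rintro ⟨u, rfl⟩
    exact ⟨f u, by simp⟩
  · rintro ⟨w, hw⟩
    refine ⟨g w - x, ?_⟩
    have : g (f (g w)) - g w = g (f x) := by simpa using congrArg g hw
    simp [← this]

theorem finite_quotient_range_comp_sub_one [Module.Finite R (N ⧸ range (f ∘ₗ g - 1))] :
    Module.Finite R (M ⧸ range (g ∘ₗ f - 1)) := by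
  have hle : range (f ∘ₗ g - 1) ≤ ker ((range (g ∘ₗ f - 1)).mkQ ∘ₗ g) := by
    rintro _ ⟨w, rfl⟩
    rw [mem_ker, comp_apply, Submodule.mkQ_apply, Submodule.Quotient.mk_eq_zero]
    exact ⟨g w, by simp⟩
  refine Module.Finite.of_surjective ((range (f ∘ₗ g - 1)).liftQ _ hle) ?_
  rintro ⟨x⟩
  exact ⟨Submodule.Quotient.mk (f x), (Submodule.Quotient.eq _).2 ⟨x, by simp⟩⟩

end LinearMap

section Units

variable {E : Type*} [NormedAddCommGroup E] [NormedSpace ℂ E]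

theorem UpperSemiFredholm.units_mul_mul {T : E →L[ℂ] E} (hT : UpperSemiFredholm T)
    (a b : (E →L[ℂ] E)ˣ) : UpperSemiFredholm (↑a * T * ↑b : E →L[ℂ] E) := by
  set e := ContinuousLinearEquiv.unitsEquiv ℂ E a
  set f := ContinuousLinearEquiv.unitsEquiv ℂ E b
  obtain ⟨hclosed, hker⟩ := hT
  have hrange : Set.range ⇑(↑a * T * ↑b) = e '' Set.range T := by
    change Set.range (e ∘ T ∘ f) = _
    rw [Set.range_comp, f.surjective.range_comp]
  have hker_eq : LinearMap.ker ((↑a * T * ↑b : E →L[ℂ] E) : E →ₗ[ℂ] E) =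
      (LinearMap.ker (T : E →ₗ[ℂ] E)).map (f.symm.toLinearEquiv : E →ₗ[ℂ] E) := by
    change LinearMap.ker ((e.toLinearEquiv : E →ₗ[ℂ] E) ∘ₗ (T : E →ₗ[ℂ] E) ∘ₗ
      (f.toLinearEquiv : E →ₗ[ℂ] E)) = _
    rw [LinearEquiv.ker_comp, LinearMap.ker_comp, Submodule.comap_equiv_eq_map_symm]
    rfl
  refine ⟨hrange ▸ e.toHomeomorph.isClosed_image.2 hclosed, ?_⟩
  rw [hker_eq]
  infer_instance

theorem LowerSemiFredholm.units_mul_mul {T : E →L[ℂ] E} (hT : LowerSemiFredholm T)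
    (a b : (E →L[ℂ] E)ˣ) : LowerSemiFredholm (↑a * T * ↑b : E →L[ℂ] E) := by
  set e := ContinuousLinearEquiv.unitsEquiv ℂ E a
  set f := ContinuousLinearEquiv.unitsEquiv ℂ E b
  have hrange : (LinearMap.range (T : E →ₗ[ℂ] E)).map (e.toLinearEquiv : E →ₗ[ℂ] E) =
      LinearMap.range ((↑a * T * ↑b : E →L[ℂ] E) : E →ₗ[ℂ] E) := by
    change _ = LinearMap.range ((e.toLinearEquiv : E →ₗ[ℂ] E) ∘ₗ (T : E →ₗ[ℂ] E) ∘ₗ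
      (f.toLinearEquiv : E →ₗ[ℂ] E))
    rw [LinearMap.range_comp, LinearEquiv.range_comp]
  have : FiniteDimensional ℂ (E ⧸ LinearMap.range (T : E →ₗ[ℂ] E)) := hT
  exact Module.Finite.equiv (Submodule.Quotient.equiv _ _ e.toLinearEquiv hrange)

theorem upperSemiFredholm_units_mul_mul_iff {T : E →L[ℂ] E} (a b : (E →L[ℂ] E)ˣ) :
    UpperSemiFredholm (↑a * T * ↑b : E →L[ℂ] E) ↔ UpperSemiFredholm T :=
  ⟨fun h => by simpa [mul_assoc] using h.units_mul_mul a⁻¹ b⁻¹, fun h => h.units_mul_mul a b⟩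

theorem lowerSemiFredholm_units_mul_mul_iff {T : E →L[ℂ] E} (a b : (E →L[ℂ] E)ˣ) :
    LowerSemiFredholm (↑a * T * ↑b : E →L[ℂ] E) ↔ LowerSemiFredholm T :=
  ⟨fun h => by simpa [mul_assoc] using h.units_mul_mul a⁻¹ b⁻¹, fun h => h.units_mul_mul a b⟩

end Units

section Jacobson

variable {X Y : Type*} [NormedAddCommGroup X] [NormedSpace ℂ X]
  [NormedAddCommGroup Y] [NormedSpace ℂ Y]

theorem UpperSemiFredholm.swap_comp_sub_one {A : X →L[ℂ] Y} {B : Y →L[ℂ] X}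
    (h : UpperSemiFredholm (A ∘L B - 1)) : UpperSemiFredholm (B ∘L A - 1) := by
  obtain ⟨hclosed, hker⟩ := h
  have hrange : Set.range ⇑(B ∘L A - 1) = A ⁻¹' Set.range ⇑(A ∘L B - 1) :=
    congrArg SetLike.coe (LinearMap.range_comp_sub_one_eq_comap (A : X →ₗ[ℂ] Y) B)
  have : Module.Finite ℂ (LinearMap.ker ((A : X →ₗ[ℂ] Y) ∘ₗ (B : Y →ₗ[ℂ] X) - 1)) := hker
  exact ⟨hrange ▸ hclosed.preimage A.continuous,
    (LinearMap.kerCompSubOneEquiv (A : X →ₗ[ℂ] Y) B).symm.finiteDimensional⟩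

theorem LowerSemiFredholm.swap_comp_sub_one {A : X →L[ℂ] Y} {B : Y →L[ℂ] X}
    (h : LowerSemiFredholm (A ∘L B - 1)) : LowerSemiFredholm (B ∘L A - 1) :=
  have : Module.Finite ℂ (Y ⧸ LinearMap.range ((A : X →ₗ[ℂ] Y) ∘ₗ (B : Y →ₗ[ℂ] X) - 1)) := h
  LinearMap.finite_quotient_range_comp_sub_one (A : X →ₗ[ℂ] Y) B

theorem upperSemiFredholm_comp_sub_one_comm (A : X →L[ℂ] Y) (B : Y →L[ℂ] X) :
    UpperSemiFredholm (A ∘L B - 1) ↔ UpperSemiFredholm (B ∘L A - 1) :=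
  ⟨UpperSemiFredholm.swap_comp_sub_one, UpperSemiFredholm.swap_comp_sub_one⟩

theorem lowerSemiFredholm_comp_sub_one_comm (A : X →L[ℂ] Y) (B : Y →L[ℂ] X) :
    LowerSemiFredholm (A ∘L B - 1) ↔ LowerSemiFredholm (B ∘L A - 1) :=
  ⟨LowerSemiFredholm.swap_comp_sub_one, LowerSemiFredholm.swap_comp_sub_one⟩

theorem comp_mul_sub_mul_comp_eq_zero {A : X →L[ℂ] Y} {B C D : Y →L[ℂ] X}
    (h : A ∘L D ∘L A ∘L B ∘L A = A ∘L D ∘L A ∘L C ∘L A) (E : Y →L[ℂ] X) :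
    (A ∘L D) * (A ∘L B - A ∘L C) * (A ∘L E) = 0 := by
  rw [mul_sub, sub_mul, sub_eq_zero]
  ext y
  exact DFunLike.congr_fun h (E y)

end Jacobson

theorem stmt_18_general {X Y : Type*} [NormedAddCommGroup X] [NormedSpace ℂ X]
    [NormedAddCommGroup Y] [NormedSpace ℂ Y]
    (A : X →L[ℂ] Y) (B C : Y →L[ℂ] X)
    (h1 : A ∘L B ∘L A ∘L B ∘L A = A ∘L B ∘L A ∘L C ∘L A)
    (h3 : A ∘L C ∘L A ∘L B ∘L A = A ∘L C ∘L A ∘L C ∘L A) :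
    (UpperSemiFredholm (A ∘L C - 1) ↔ UpperSemiFredholm (B ∘L A - 1)) ∧
    (LowerSemiFredholm (A ∘L C - 1) ↔ LowerSemiFredholm (B ∘L A - 1)) := by
  obtain ⟨a, b, hab⟩ := exists_units_sub_one_eq_mul_mul
    (comp_mul_sub_mul_comp_eq_zero h1 B) (comp_mul_sub_mul_comp_eq_zero h1 C)
    (comp_mul_sub_mul_comp_eq_zero h3 B) (comp_mul_sub_mul_comp_eq_zero h3 C)
  rw [← upperSemiFredholm_units_mul_mul_iff a b, ← lowerSemiFredholm_units_mul_mul_iff a b, ← hab,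
    upperSemiFredholm_comp_sub_one_comm, lowerSemiFredholm_comp_sub_one_comm]
  exact ⟨Iff.rfl, Iff.rfl⟩

theorem stmt_18 {X Y : Type*} [NormedAddCommGroup X] [NormedSpace ℂ X] [CompleteSpace X]
    [NormedAddCommGroup Y] [NormedSpace ℂ Y] [CompleteSpace Y]
    (A : X →L[ℂ] Y) (B C : Y →L[ℂ] X)
    (h1 : A ∘L B ∘L A ∘L B ∘L A = A ∘L B ∘L A ∘L C ∘L A)
    (h2 : A ∘L B ∘L A ∘L C ∘L A = A ∘L C ∘L A ∘L B ∘L A)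
    (h3 : A ∘L C ∘L A ∘L B ∘L A = A ∘L C ∘L A ∘L C ∘L A) :
    (UpperSemiFredholm (A ∘L C - 1) ↔ UpperSemiFredholm (B ∘L A - 1)) ∧
    (LowerSemiFredholm (A ∘L C - 1) ↔ LowerSemiFredholm (B ∘L A - 1)) :=
  stmt_18_general A B C h1 h3
end

section
/- Let X and Y be complex Banach spaces, A : X → Y and B, C : Y → X bounded linear operators satisfying A(BA)² = ABACA = ACABA = (AC)²A. Then AC − I is Fredholm if and only if BA − I is Fredholm. -/
/-! Both Fredholm conditions split into a kernel and a cokernel condition, and each is transferred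
by an explicit map. On kernels, `A` maps `ker (BA - 1)` into `ker (AC - 1)` with left inverse `B`,
and `B` maps `ker (AC - 1)` into `ker (BA - 1)` with left inverse `A`. On cokernels, `A` induces a
surjection `X ⧸ range (BA - 1) → Y ⧸ range (AC - 1)`, and `W = BACAC` induces a surjection
`Y ⧸ range (AC - 1) → X ⧸ range (BA - 1)`: it intertwines `AC - 1` with `BA - 1`, and
`WA = (BA)³ ≡ 1` modulo `range (BA - 1)`. -/

open ContinuousLinearMap Filter Topology Set

/-- `T` is Fredholm : finite-dimensional kernel and range of finite codimension. -/
def IsFredholmOp {E : Type*} [NormedAddCommGroup E] [NormedSpace ℂ E]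
    (T : E →L[ℂ] E) : Prop :=
  FiniteDimensional ℂ (LinearMap.ker (T : E →ₗ[ℂ] E)) ∧ FiniteDimensional ℂ (E ⧸ LinearMap.range (T : E →ₗ[ℂ] E))

namespace Module.End

open Submodule

variable {K M N : Type*} [DivisionRing K] [AddCommGroup M] [Module K M] [AddCommGroup N]
  [Module K N]

def IsFredholm (T : Module.End K M) : Prop :=
  FiniteDimensional K (LinearMap.ker T) ∧ FiniteDimensional K (M ⧸ LinearMap.range T)

theorem mem_ker_sub_one_iff {T : Module.End K M} {x : M} :
    x ∈ LinearMap.ker (T - 1) ↔ T x = x := by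
  simp [sub_eq_zero]

theorem finiteDimensional_ker_of_injOn {S : Module.End K M} {T : Module.End K N}
    [FiniteDimensional K (LinearMap.ker T)] (f : M →ₗ[K] N)
    (hmaps : ∀ x ∈ LinearMap.ker S, f x ∈ LinearMap.ker T) (hinj : InjOn f (LinearMap.ker S)) :
    FiniteDimensional K (LinearMap.ker S) :=
  FiniteDimensional.of_injective
    ((f.domRestrict (LinearMap.ker S)).codRestrict (LinearMap.ker T) fun x ↦ hmaps x x.2)
    fun x y hxy ↦ Subtype.ext (hinj x.2 y.2 (congrArg Subtype.val hxy))

theorem finiteDimensional_quotient_range_of_sup_eq_top {S : Module.End K M} {T : Module.End K N}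
    [FiniteDimensional K (M ⧸ LinearMap.range S)] (f : M →ₗ[K] N)
    (hmaps : ∀ x, f (S x) ∈ LinearMap.range T) (hsup : LinearMap.range T ⊔ LinearMap.range f = ⊤) :
    FiniteDimensional K (N ⧸ LinearMap.range T) := by
  have hle : LinearMap.range S ≤ (LinearMap.range T).comap f := by
    rintro _ ⟨x, rfl⟩
    exact hmaps x
  refine Module.Finite.of_surjective ((LinearMap.range S).mapQ (LinearMap.range T) f hle) ?_
  rw [← LinearMap.range_eq_top, range_mapQ, map_mkQ_eq_top, hsup]

theorem range_comp_sub_one_sup_range_eq_top (f : M →ₗ[K] N) (g : N →ₗ[K] M) :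
    LinearMap.range (f ∘ₗ g - 1) ⊔ LinearMap.range f = ⊤ := by
  refine eq_top_iff.2 fun y _ ↦ ?_
  have hy : y = -(f ∘ₗ g - 1) y + f (g y) := by simp
  rw [hy]
  exact add_mem_sup (neg_mem (LinearMap.mem_range_self _ y)) (LinearMap.mem_range_self f _)

variable {A : M →ₗ[K] N} {B C : N →ₗ[K] M}

theorem apply_mem_ker_comp_sub_one_of_mem_ker
    (h1 : A ∘ₗ B ∘ₗ A ∘ₗ B ∘ₗ A = A ∘ₗ B ∘ₗ A ∘ₗ C ∘ₗ A)
    (h2 : A ∘ₗ B ∘ₗ A ∘ₗ C ∘ₗ A = A ∘ₗ C ∘ₗ A ∘ₗ B ∘ₗ A) {x : M}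
    (hx : x ∈ LinearMap.ker (B ∘ₗ A - 1)) : A x ∈ LinearMap.ker (A ∘ₗ C - 1) := by
  replace hx : B (A x) = x := mem_ker_sub_one_iff.1 hx
  refine mem_ker_sub_one_iff.2 ?_
  calc A (C (A x)) = A (C (A (B (A x)))) := by rw [hx]
    _ = A (B (A (B (A x)))) := (LinearMap.congr_fun (h1.trans h2) x).symm
    _ = A x := by rw [hx, hx]

theorem apply_apply_eq_of_mem_ker (h2 : A ∘ₗ B ∘ₗ A ∘ₗ C ∘ₗ A = A ∘ₗ C ∘ₗ A ∘ₗ B ∘ₗ A)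
    (h3 : A ∘ₗ C ∘ₗ A ∘ₗ B ∘ₗ A = A ∘ₗ C ∘ₗ A ∘ₗ C ∘ₗ A) {y : N}
    (hy : y ∈ LinearMap.ker (A ∘ₗ C - 1)) : A (B y) = y := by
  replace hy : A (C y) = y := mem_ker_sub_one_iff.1 hy
  calc A (B y) = A (B (A (C (A (C y))))) := by rw [hy, hy]
    _ = A (C (A (C (A (C y))))) := LinearMap.congr_fun (h2.trans h3) (C y)
    _ = y := by rw [hy, hy, hy]

theorem apply_comp_sub_one_mem_range (h3 : A ∘ₗ C ∘ₗ A ∘ₗ B ∘ₗ A = A ∘ₗ C ∘ₗ A ∘ₗ C ∘ₗ A)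
    (x : M) :
    A ((B ∘ₗ A - 1) x) ∈ LinearMap.range (A ∘ₗ C - 1) := by
  have e3 : A (C (A (B (A x)))) = A (C (A (C (A x)))) := LinearMap.congr_fun h3 x
  refine ⟨A x - A (B (A x)) + A (C (A x)), ?_⟩
  simp only [LinearMap.sub_apply, LinearMap.comp_apply, Module.End.one_apply, map_add, map_sub, e3]
  abel

theorem comp_apply_comp_sub_one (h2 : A ∘ₗ B ∘ₗ A ∘ₗ C ∘ₗ A = A ∘ₗ C ∘ₗ A ∘ₗ B ∘ₗ A)
    (h3 : A ∘ₗ C ∘ₗ A ∘ₗ B ∘ₗ A = A ∘ₗ C ∘ₗ A ∘ₗ C ∘ₗ A) (y : N) :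
    (B ∘ₗ A ∘ₗ C ∘ₗ A ∘ₗ C) ((A ∘ₗ C - 1) y) =
      (B ∘ₗ A - 1) ((B ∘ₗ A ∘ₗ C ∘ₗ A ∘ₗ C) y) := by
  have e : A (B (A (C (A (C y))))) = A (C (A (C (A (C y))))) :=
    LinearMap.congr_fun (h2.trans h3) (C y)
  simp only [LinearMap.sub_apply, LinearMap.comp_apply, Module.End.one_apply, map_sub, e]

theorem range_comp_sub_one_sup_range_comp_eq_top
    (h1 : A ∘ₗ B ∘ₗ A ∘ₗ B ∘ₗ A = A ∘ₗ B ∘ₗ A ∘ₗ C ∘ₗ A)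
    (h2 : A ∘ₗ B ∘ₗ A ∘ₗ C ∘ₗ A = A ∘ₗ C ∘ₗ A ∘ₗ B ∘ₗ A)
    (h3 : A ∘ₗ C ∘ₗ A ∘ₗ B ∘ₗ A = A ∘ₗ C ∘ₗ A ∘ₗ C ∘ₗ A) :
    LinearMap.range (B ∘ₗ A - 1) ⊔ LinearMap.range (B ∘ₗ A ∘ₗ C ∘ₗ A ∘ₗ C) = ⊤ := by
  refine eq_top_iff.2 fun x _ ↦ ?_
  have e : A (B (A (B (A x)))) = A (C (A (C (A x)))) :=
    LinearMap.congr_fun (h1.trans (h2.trans h3)) x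
  have hx : x = -(B ∘ₗ A - 1) (B (A (B (A x))) + B (A x) + x) +
      (B ∘ₗ A ∘ₗ C ∘ₗ A ∘ₗ C) (A x) := by
    simp only [LinearMap.sub_apply, LinearMap.comp_apply, Module.End.one_apply, map_add, ← e]
    abel
  rw [hx]
  exact add_mem_sup (neg_mem (LinearMap.mem_range_self _ _)) (LinearMap.mem_range_self _ _)

theorem isFredholm_comp_sub_one_iff
    (h1 : A ∘ₗ B ∘ₗ A ∘ₗ B ∘ₗ A = A ∘ₗ B ∘ₗ A ∘ₗ C ∘ₗ A)
    (h2 : A ∘ₗ B ∘ₗ A ∘ₗ C ∘ₗ A = A ∘ₗ C ∘ₗ A ∘ₗ B ∘ₗ A)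
    (h3 : A ∘ₗ C ∘ₗ A ∘ₗ B ∘ₗ A = A ∘ₗ C ∘ₗ A ∘ₗ C ∘ₗ A) :
    IsFredholm (A ∘ₗ C - 1) ↔ IsFredholm (B ∘ₗ A - 1) := by
  constructor
  · rintro ⟨_, _⟩
    refine ⟨finiteDimensional_ker_of_injOn (T := A ∘ₗ C - 1) A
      (fun x ↦ apply_mem_ker_comp_sub_one_of_mem_ker h1 h2)
      (Set.LeftInvOn.injOn (f₁' := B) fun x hx ↦ mem_ker_sub_one_iff.1 hx), ?_⟩
    exact finiteDimensional_quotient_range_of_sup_eq_top (S := A ∘ₗ C - 1) _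
      (fun y ↦ by rw [comp_apply_comp_sub_one h2 h3]; exact LinearMap.mem_range_self _ _)
      (range_comp_sub_one_sup_range_comp_eq_top h1 h2 h3)
  · rintro ⟨_, _⟩
    refine ⟨finiteDimensional_ker_of_injOn (T := B ∘ₗ A - 1) B (fun y hy ↦ ?_)
      (Set.LeftInvOn.injOn (f₁' := A) fun y ↦ apply_apply_eq_of_mem_ker h2 h3), ?_⟩
    · exact mem_ker_sub_one_iff.2 (congrArg B (apply_apply_eq_of_mem_ker h2 h3 hy))
    exact finiteDimensional_quotient_range_of_sup_eq_top (S := B ∘ₗ A - 1) A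
      (apply_comp_sub_one_mem_range h3)
      (range_comp_sub_one_sup_range_eq_top A C)

end Module.End

theorem stmt_19_general {X Y : Type*} [NormedAddCommGroup X] [NormedSpace ℂ X]
    [NormedAddCommGroup Y] [NormedSpace ℂ Y]
    (A : X →L[ℂ] Y) (B C : Y →L[ℂ] X)
    (h1 : A ∘L B ∘L A ∘L B ∘L A = A ∘L B ∘L A ∘L C ∘L A)
    (h2 : A ∘L B ∘L A ∘L C ∘L A = A ∘L C ∘L A ∘L B ∘L A)
    (h3 : A ∘L C ∘L A ∘L B ∘L A = A ∘L C ∘L A ∘L C ∘L A) :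
    IsFredholmOp (A ∘L C - 1) ↔ IsFredholmOp (B ∘L A - 1) :=
  Module.End.isFredholm_comp_sub_one_iff (congrArg toLinearMap h1) (congrArg toLinearMap h2)
    (congrArg toLinearMap h3)

theorem stmt_19 {X Y : Type*} [NormedAddCommGroup X] [NormedSpace ℂ X] [CompleteSpace X]
    [NormedAddCommGroup Y] [NormedSpace ℂ Y] [CompleteSpace Y]
    (A : X →L[ℂ] Y) (B C : Y →L[ℂ] X)
    (h1 : A ∘L B ∘L A ∘L B ∘L A = A ∘L B ∘L A ∘L C ∘L A)
    (h2 : A ∘L B ∘L A ∘L C ∘L A = A ∘L C ∘L A ∘L B ∘L A)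
    (h3 : A ∘L C ∘L A ∘L B ∘L A = A ∘L C ∘L A ∘L C ∘L A) :
    IsFredholmOp (A ∘L C - 1) ↔ IsFredholmOp (B ∘L A - 1) :=
  stmt_19_general A B C h1 h2 h3
end
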